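/- arXiv:1809.05178 — 6 statements merged into one kernel-verified Lean document; each statement's English description precedes it below -/
import Mathlib

section
/- Let D ⊂ ℝ^d be a bounded open set, let D_1, …, D_n be pairwise disjoint nonempty open subsets of D whose union has full measure in D, and let f ∈ L²(D). Fix 0 < λ ≤ Λ and real numbers a_1,…,a_n, b_1,…,b_n with λ ≤ a_i, b_i ≤ Λ for all i, and set a = Σ_i a_i χ_{D_i}, b = Σ_i b_i χ_{D_i}. Suppose u_a is a weak solution for the coefficient a and u_b is a weak solution for the coefficient b (both with right-hand side f). Then for every i and every smooth compactly supported function v : ℝ^d → ℝ with support contained in D_i, one has |a_i − b_i| · |∫_{D_i} f v dx| ≤ Λ² · (∫_{D_i} |∇u_a − ∇u_b|² dx)^{1/2} · (∫_{D_i} |∇v|² dx)^{1/2}. -/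
open MeasureTheory Set
open scoped RealInnerProductSpace

noncomputable section

section AuxCS

variable {α : Type*} [MeasurableSpace α] {μ : Measure α}
variable {E : Type*} [NormedAddCommGroup E] [InnerProductSpace ℝ E]

lemma memLp_integrable_inner {F G : α → E} (hF : MemLp F 2 μ) (hG : MemLp G 2 μ) :
    Integrable (fun x => ⟪F x, G x⟫) μ := by
  have h := L2.integrable_inner (𝕜 := ℝ) (hF.toLp F) (hG.toLp G)
  refine h.congr ?_
  filter_upwards [hF.coeFn_toLp, hG.coeFn_toLp] with x hx hy
  rw [hx, hy]

lemma sqrt_integral_sq_eq_norm_toLp {F : α → E} (hF : MemLp F 2 μ) :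
    Real.sqrt (∫ x, ‖F x‖ ^ 2 ∂μ) = ‖hF.toLp F‖ := by
  have h1 : (⟪hF.toLp F, hF.toLp F⟫ : ℝ) = ∫ x, ‖F x‖ ^ 2 ∂μ := by
    rw [L2.inner_def]
    refine integral_congr_ae ?_
    filter_upwards [hF.coeFn_toLp] with x hx
    rw [hx, real_inner_self_eq_norm_sq]
  rw [← h1, real_inner_self_eq_norm_sq, Real.sqrt_sq (norm_nonneg _)]

lemma abs_integral_inner_le_sqrt {F G : α → E} (hF : MemLp F 2 μ) (hG : MemLp G 2 μ) :
    |∫ x, ⟪F x, G x⟫ ∂μ| ≤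
      Real.sqrt (∫ x, ‖F x‖ ^ 2 ∂μ) * Real.sqrt (∫ x, ‖G x‖ ^ 2 ∂μ) := by
  have h1 : (⟪hF.toLp F, hG.toLp G⟫ : ℝ) = ∫ x, ⟪F x, G x⟫ ∂μ := by
    rw [L2.inner_def]
    refine integral_congr_ae ?_
    filter_upwards [hF.coeFn_toLp, hG.coeFn_toLp] with x hx hy
    rw [hx, hy]
  rw [← h1, sqrt_integral_sq_eq_norm_toLp hF, sqrt_integral_sq_eq_norm_toLp hG]
  exact abs_real_inner_le_norm _ _

end AuxCS

lemma aestronglyMeasurable_gradient {d : ℕ} (u : EuclideanSpace ℝ (Fin d) → ℝ)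
    (μ : Measure (EuclideanSpace ℝ (Fin d))) :
    AEStronglyMeasurable (gradient u) μ := by
  have h : Measurable (gradient u) :=
    ((InnerProductSpace.toDual ℝ (EuclideanSpace ℝ (Fin d))).symm.continuous.measurable).comp
      (measurable_fderiv ℝ u)
  exact h.aestronglyMeasurable

lemma gradient_eq_zero_of_nmem_tsupport {d : ℕ} {v : EuclideanSpace ℝ (Fin d) → ℝ}
    {x : EuclideanSpace ℝ (Fin d)} (hx : x ∉ tsupport v) : gradient v x = 0 := by
  have h : fderiv ℝ v x = 0 := by
    by_contra h
    exact hx (support_fderiv_subset ℝ (by simpa [Function.mem_support] using h))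
  simp [gradient, h]

/-- `u` is a weak solution of `-div(a ∇u) = f` on `D`: `u` is differentiable on `D`,
its gradient is square-integrable on `D`, and the weak formulation holds for all smooth
compactly supported test functions supported in `D`. -/
def IsWeakSolution {d : ℕ} (D : Set (EuclideanSpace ℝ (Fin d)))
    (a f u : EuclideanSpace ℝ (Fin d) → ℝ) : Prop :=
  (∀ x ∈ D, DifferentiableAt ℝ u x) ∧
  IntegrableOn (fun x => ‖gradient u x‖ ^ 2) D volume ∧
  ∀ v : EuclideanSpace ℝ (Fin d) → ℝ, ContDiff ℝ (⊤ : ℕ∞) v → HasCompactSupport v →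
    tsupport v ⊆ D →
    (∫ x in D, a x * ⟪gradient u x, gradient v x⟫) = ∫ x in D, f x * v x

theorem piecewise_constant_stability {d n : ℕ}
    (D : Set (EuclideanSpace ℝ (Fin d))) (hDopen : IsOpen D)
    (hDbdd : Bornology.IsBounded D)
    (Dsub : Fin n → Set (EuclideanSpace ℝ (Fin d)))
    (hopen : ∀ i, IsOpen (Dsub i)) (hne : ∀ i, (Dsub i).Nonempty)
    (hsub : ∀ i, Dsub i ⊆ D)
    (hdisj : Pairwise fun i j => Disjoint (Dsub i) (Dsub j))
    (hfull : volume (D \ ⋃ i, Dsub i) = 0)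
    (f : EuclideanSpace ℝ (Fin d) → ℝ) (hf : MemLp f 2 (volume.restrict D))
    (lam Lam : ℝ) (hlam : 0 < lam) (hlamLam : lam ≤ Lam)
    (av bv : Fin n → ℝ)
    (hav : ∀ i, lam ≤ av i ∧ av i ≤ Lam) (hbv : ∀ i, lam ≤ bv i ∧ bv i ≤ Lam)
    (a b : EuclideanSpace ℝ (Fin d) → ℝ)
    (ha : a = fun x => ∑ i, (Dsub i).indicator (fun _ => av i) x)
    (hb : b = fun x => ∑ i, (Dsub i).indicator (fun _ => bv i) x)
    (ua ub : EuclideanSpace ℝ (Fin d) → ℝ)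
    (hua : IsWeakSolution D a f ua) (hub : IsWeakSolution D b f ub) :
    ∀ i : Fin n, ∀ v : EuclideanSpace ℝ (Fin d) → ℝ,
      ContDiff ℝ (⊤ : ℕ∞) v → HasCompactSupport v → tsupport v ⊆ Dsub i →
      |av i - bv i| * |∫ x in Dsub i, f x * v x| ≤
        Lam ^ 2 * Real.sqrt (∫ x in Dsub i, ‖gradient ua x - gradient ub x‖ ^ 2) *
          Real.sqrt (∫ x in Dsub i, ‖gradient v x‖ ^ 2) := by
  intro i v hv hvc hvs
  have hDmeas : MeasurableSet D := hDopen.measurableSet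
  have hImeas : MeasurableSet (Dsub i) := (hopen i).measurableSet
  -- gradient of v and v vanish off Dsub i
  have hgv : ∀ x, x ∉ Dsub i → gradient v x = 0 := fun x hx =>
    gradient_eq_zero_of_nmem_tsupport (fun h => hx (hvs h))
  have hv0 : ∀ x, x ∉ Dsub i → v x = 0 := fun x hx =>
    image_eq_zero_of_notMem_tsupport (fun h => hx (hvs h))
  -- coefficient values on Dsub i
  have haval : ∀ x ∈ Dsub i, a x = av i := by
    intro x hx
    have hax : a x = ∑ j, (Dsub j).indicator (fun _ => av j) x := by rw [ha]
    rw [hax, Finset.sum_eq_single i]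
    · simp [Set.indicator_of_mem hx]
    · intro j _ hj
      exact Set.indicator_of_notMem
        (fun hxj => Set.disjoint_left.mp (hdisj hj) hxj hx) _
    · intro h; exact absurd (Finset.mem_univ i) h
  have hbval : ∀ x ∈ Dsub i, b x = bv i := by
    intro x hx
    have hbx : b x = ∑ j, (Dsub j).indicator (fun _ => bv j) x := by rw [hb]
    rw [hbx, Finset.sum_eq_single i]
    · simp [Set.indicator_of_mem hx]
    · intro j _ hj
      exact Set.indicator_of_notMem
        (fun hxj => Set.disjoint_left.mp (hdisj hj) hxj hx) _
    · intro h; exact absurd (Finset.mem_univ i) h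
  have Ha := hua.2.2 v hv hvc (hvs.trans (hsub i))
  have Hb := hub.2.2 v hv hvc (hvs.trans (hsub i))
  have hres : ∀ g : EuclideanSpace ℝ (Fin d) → ℝ, (∀ x ∈ D \ Dsub i, g x = 0) →
      (∫ x in D, g x) = ∫ x in Dsub i, g x := fun g hg =>
    setIntegral_eq_of_subset_of_forall_diff_eq_zero hDmeas (hsub i) hg
  have HA : av i * (∫ x in Dsub i, ⟪gradient ua x, gradient v x⟫) =
      ∫ x in Dsub i, f x * v x := by
    calc av i * (∫ x in Dsub i, ⟪gradient ua x, gradient v x⟫)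
        = ∫ x in Dsub i, av i * ⟪gradient ua x, gradient v x⟫ := (integral_const_mul _ _).symm
      _ = ∫ x in Dsub i, a x * ⟪gradient ua x, gradient v x⟫ :=
          (setIntegral_congr_fun hImeas (fun x hx => by rw [haval x hx])).symm
      _ = ∫ x in D, a x * ⟪gradient ua x, gradient v x⟫ :=
          (hres _ (fun x hx => by rw [hgv x hx.2, inner_zero_right, mul_zero])).symm
      _ = ∫ x in D, f x * v x := Ha
      _ = ∫ x in Dsub i, f x * v x := hres _ (fun x hx => by rw [hv0 x hx.2, mul_zero])
  have HB : bv i * (∫ x in Dsub i, ⟪gradient ub x, gradient v x⟫) =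
      ∫ x in Dsub i, f x * v x := by
    calc bv i * (∫ x in Dsub i, ⟪gradient ub x, gradient v x⟫)
        = ∫ x in Dsub i, bv i * ⟪gradient ub x, gradient v x⟫ := (integral_const_mul _ _).symm
      _ = ∫ x in Dsub i, b x * ⟪gradient ub x, gradient v x⟫ :=
          (setIntegral_congr_fun hImeas (fun x hx => by rw [hbval x hx])).symm
      _ = ∫ x in D, b x * ⟪gradient ub x, gradient v x⟫ :=
          (hres _ (fun x hx => by rw [hgv x hx.2, inner_zero_right, mul_zero])).symm
      _ = ∫ x in D, f x * v x := Hb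
      _ = ∫ x in Dsub i, f x * v x := hres _ (fun x hx => by rw [hv0 x hx.2, mul_zero])
  set μi := volume.restrict (Dsub i) with hμi
  -- Memℒp facts
  have hwa : MemLp (gradient ua) 2 μi :=
    (memLp_two_iff_integrable_sq_norm (aestronglyMeasurable_gradient ua μi)).2
      (hua.2.1.mono_set (hsub i))
  have hwb : MemLp (gradient ub) 2 μi :=
    (memLp_two_iff_integrable_sq_norm (aestronglyMeasurable_gradient ub μi)).2
      (hub.2.1.mono_set (hsub i))
  have hgvmem : MemLp (gradient v) 2 μi := by
    have hc : Continuous (gradient v) :=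
      (InnerProductSpace.toDual ℝ (EuclideanSpace ℝ (Fin d))).symm.continuous.comp
        (hv.continuous_fderiv (by simp))
    have hcs : HasCompactSupport (gradient v) := (HasCompactSupport.fderiv (𝕜 := ℝ) hvc).comp_left (map_zero _)
    exact (hc.memLp_of_hasCompactSupport hcs).restrict _
  have hIa : Integrable (fun x => ⟪gradient ua x, gradient v x⟫) μi :=
    memLp_integrable_inner hwa hgvmem
  have hIb : Integrable (fun x => ⟪gradient ub x, gradient v x⟫) μi :=
    memLp_integrable_inner hwb hgvmem
  set A := ∫ x in Dsub i, ⟪gradient ua x, gradient v x⟫ with hA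
  set B := ∫ x in Dsub i, ⟪gradient ub x, gradient v x⟫ with hB
  set Fv := ∫ x in Dsub i, f x * v x with hFv
  have hBA : B - A = ∫ x in Dsub i, ⟪gradient ub x - gradient ua x, gradient v x⟫ := by
    rw [hA, hB, ← integral_sub hIb hIa]
    congr 1
    funext x
    rw [inner_sub_left]
  have key : (av i - bv i) * Fv = (av i * bv i) * (B - A) := by
    linear_combination (bv i) * HA - (av i) * HB
  have hposa : 0 < av i := lt_of_lt_of_le hlam (hav i).1
  have hposb : 0 < bv i := lt_of_lt_of_le hlam (hbv i).1
  have habs : |av i - bv i| * |Fv| = (av i * bv i) * |B - A| := by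
    rw [← abs_mul, key, abs_mul, abs_of_pos (mul_pos hposa hposb)]
  have hCS : |B - A| ≤
      Real.sqrt (∫ x in Dsub i, ‖gradient ua x - gradient ub x‖ ^ 2) *
        Real.sqrt (∫ x in Dsub i, ‖gradient v x‖ ^ 2) := by
    have hw : MemLp (fun x => gradient ub x - gradient ua x) 2 μi := hwb.sub hwa
    have h := abs_integral_inner_le_sqrt hw hgvmem
    have hnorm : (∫ x in Dsub i, ‖gradient ua x - gradient ub x‖ ^ 2) =
        ∫ x in Dsub i, ‖gradient ub x - gradient ua x‖ ^ 2 := by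
      refine integral_congr_ae (Filter.Eventually.of_forall fun x => ?_)
      show ‖gradient ua x - gradient ub x‖ ^ 2 = ‖gradient ub x - gradient ua x‖ ^ 2
      rw [norm_sub_rev]
    rw [hBA, hnorm]
    exact h
  have hLam : 0 < Lam := lt_of_lt_of_le hlam hlamLam
  calc |av i - bv i| * |Fv| = (av i * bv i) * |B - A| := habs
    _ ≤ Lam ^ 2 * (Real.sqrt (∫ x in Dsub i, ‖gradient ua x - gradient ub x‖ ^ 2) *
          Real.sqrt (∫ x in Dsub i, ‖gradient v x‖ ^ 2)) := by
        refine mul_le_mul ?_ hCS (abs_nonneg _) (by positivity)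
        calc av i * bv i ≤ Lam * Lam :=
              mul_le_mul (hav i).2 (hbv i).2 hposb.le hLam.le
          _ = Lam ^ 2 := (sq Lam).symm
    _ = Lam ^ 2 * Real.sqrt (∫ x in Dsub i, ‖gradient ua x - gradient ub x‖ ^ 2) *
          Real.sqrt (∫ x in Dsub i, ‖gradient v x‖ ^ 2) := (mul_assoc _ _ _).symm
end
end

section
/- Let D ⊂ ℝ^d be a bounded open set, let D_1, …, D_n be pairwise disjoint nonempty open subsets of D whose union has full measure in D, and let f ∈ L²(D). Fix 0 < λ ≤ Λ and real numbers a_1,…,a_n, b_1,…,b_n with λ ≤ a_i, b_i ≤ Λ, and set a = Σ_i a_i χ_{D_i}, b = Σ_i b_i χ_{D_i}. Suppose u_a is a weak solution for coefficient a and u_b is a weak solution for coefficient b (both with right-hand side f), and that u_a = u_b on D. If for every i there exists a smooth compactly supported function v_i with support contained in D_i and ∫_{D_i} f v_i dx ≠ 0, then a_i = b_i for all i = 1, …, n, i.e., a = b. -/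
open MeasureTheory Set
open scoped RealInnerProductSpace

noncomputable section

theorem piecewise_constant_identifiability {d n : ℕ}
    (D : Set (EuclideanSpace ℝ (Fin d))) (hDopen : IsOpen D)
    (hDbdd : Bornology.IsBounded D)
    (Dsub : Fin n → Set (EuclideanSpace ℝ (Fin d)))
    (hopen : ∀ i, IsOpen (Dsub i)) (hne : ∀ i, (Dsub i).Nonempty)
    (hsub : ∀ i, Dsub i ⊆ D)
    (hdisj : Pairwise fun i j => Disjoint (Dsub i) (Dsub j))
    (hfull : volume (D \ ⋃ i, Dsub i) = 0)
    (f : EuclideanSpace ℝ (Fin d) → ℝ) (hf : MemLp f 2 (volume.restrict D))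
    (lam Lam : ℝ) (hlam : 0 < lam) (hlamLam : lam ≤ Lam)
    (av bv : Fin n → ℝ)
    (hav : ∀ i, lam ≤ av i ∧ av i ≤ Lam) (hbv : ∀ i, lam ≤ bv i ∧ bv i ≤ Lam)
    (a b : EuclideanSpace ℝ (Fin d) → ℝ)
    (ha : a = fun x => ∑ i, (Dsub i).indicator (fun _ => av i) x)
    (hb : b = fun x => ∑ i, (Dsub i).indicator (fun _ => bv i) x)
    (ua ub : EuclideanSpace ℝ (Fin d) → ℝ)
    (hua : IsWeakSolution D a f ua) (hub : IsWeakSolution D b f ub)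
    (heq : ∀ x ∈ D, ua x = ub x)
    (hfD : ∀ i : Fin n, ∃ v : EuclideanSpace ℝ (Fin d) → ℝ,
      ContDiff ℝ (⊤ : ℕ∞) v ∧ HasCompactSupport v ∧ tsupport v ⊆ Dsub i ∧
      (∫ x in Dsub i, f x * v x) ≠ 0) :
    ∀ i : Fin n, av i = bv i := by
  intro i
  obtain ⟨v, hv1, hv2, hv3, hv4⟩ := hfD i
  have hsubD : tsupport v ⊆ D := hv3.trans (hsub i)
  -- gradient of v vanishes off tsupport v
  have hgradv : ∀ x ∉ Dsub i, gradient v x = 0 := by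
    intro x hx
    have hx' : x ∉ tsupport v := fun h => hx (hv3 h)
    have : fderiv ℝ v x = 0 := by
      by_contra h
      exact hx' (support_fderiv_subset ℝ (by simpa [Function.mem_support] using h))
    simp [gradient, this]
  -- v vanishes off Dsub i
  have hv0 : ∀ x ∉ Dsub i, v x = 0 := by
    intro x hx
    have hx' : x ∉ tsupport v := fun h => hx (hv3 h)
    exact image_eq_zero_of_notMem_tsupport hx'
  -- gradients of ua and ub agree on D
  have hgrad : ∀ x ∈ D, gradient ua x = gradient ub x := by
    intro x hx
    have hev : ua =ᶠ[nhds x] ub :=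
      Filter.eventuallyEq_of_mem (hDopen.mem_nhds hx) heq
    simp only [gradient, hev.fderiv_eq]
  -- a = av i on Dsub i
  have haon : ∀ x ∈ Dsub i, a x = av i := by
    intro x hx
    simp only [ha]
    rw [Finset.sum_eq_single i]
    · simp [indicator_of_mem hx]
    · intro j _ hj
      have : x ∉ Dsub j := fun hxj =>
        (hdisj hj.symm).le_bot ⟨hx, hxj⟩
      simp [indicator_of_notMem this]
    · simp
  have hbon : ∀ x ∈ Dsub i, b x = bv i := by
    intro x hx
    simp only [hb]
    rw [Finset.sum_eq_single i]
    · simp [indicator_of_mem hx]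
    · intro j _ hj
      have : x ∉ Dsub j := fun hxj =>
        (hdisj hj.symm).le_bot ⟨hx, hxj⟩
      simp [indicator_of_notMem this]
    · simp
  set I : ℝ := ∫ x in Dsub i, ⟪gradient ua x, gradient v x⟫ with hI
  -- reduce integrals over D to integrals over Dsub i
  have keyA : (∫ x in D, a x * ⟪gradient ua x, gradient v x⟫) = av i * I := by
    rw [setIntegral_eq_of_subset_of_forall_diff_eq_zero hDopen.measurableSet (hsub i)
      (fun x hx => by simp [hgradv x hx.2])]
    rw [setIntegral_congr_fun (hopen i).measurableSet
      (g := fun x => av i * ⟪gradient ua x, gradient v x⟫)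
      (fun x hx => by simp only [haon x hx])]
    exact integral_const_mul _ _
  have keyB : (∫ x in D, b x * ⟪gradient ub x, gradient v x⟫) = bv i * I := by
    rw [setIntegral_eq_of_subset_of_forall_diff_eq_zero hDopen.measurableSet (hsub i)
      (fun x hx => by simp [hgradv x hx.2])]
    rw [setIntegral_congr_fun (hopen i).measurableSet
      (g := fun x => bv i * ⟪gradient ua x, gradient v x⟫)
      (fun x hx => by simp only [hbon x hx, hgrad x (hsub i hx)])]
    exact integral_const_mul _ _
  have keyC : (∫ x in D, f x * v x) = ∫ x in Dsub i, f x * v x :=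
    setIntegral_eq_of_subset_of_forall_diff_eq_zero hDopen.measurableSet (hsub i)
      (fun x hx => by simp [hv0 x hx.2])
  have eqA : av i * I = ∫ x in Dsub i, f x * v x := by
    rw [← keyA, hua.2.2 v hv1 hv2 hsubD, keyC]
  have eqB : bv i * I = ∫ x in Dsub i, f x * v x := by
    rw [← keyB, hub.2.2 v hv1 hv2 hsubD, keyC]
  have hIne : I ≠ 0 := fun h => hv4 (by rw [← eqA, h, mul_zero])
  have := eqA.trans eqB.symm
  exact mul_right_cancel₀ hIne this
end
end

section
/- There exist a bounded measurable function f : (0,1) → ℝ such that for every nonempty open interval U ⊆ (0,1) the function f is not almost everywhere equal to zero on U, measurable functions a, b : (0,1) → ℝ with 1 ≤ a(x) ≤ 2 and 1 ≤ b(x) ≤ 2 for all x and such that the set {x ∈ (0,1) : a(x) ≠ b(x)} has positive Lebesgue measure, and a differentiable function u : [0,1] → ℝ with u(0) = u(1) = 0 and bounded derivative, such that for every smooth compactly supported v : ℝ → ℝ with support contained in (0,1) both ∫₀¹ a(x) u'(x) v'(x) dx = ∫₀¹ f(x) v(x) dx and ∫₀¹ b(x) u'(x) v'(x) dx = ∫₀¹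 f(x) v(x) dx hold. In particular, identifiability of the diffusion coefficient fails for merely bounded measurable coefficients even when f does not vanish on any open interval. -/
open MeasureTheory Set

noncomputable section

open Real
namespace SVCX
def ell (n : ℕ) : ℝ := ((1/2)^n + (1/4)^n)/2
lemma ell_pos (n : ℕ) : 0 < ell n := by unfold ell; positivity
lemma ell_zero : ell 0 = 1 := by norm_num [ell]
lemma ell_key (n : ℕ) : ell n - 2 * ell (n+1) = (1/4)^(n+1) := by
  simp only [ell, pow_succ]; ring
lemma two_ell_lt (n : ℕ) : 2 * ell (n+1) < ell n := by
  have h1 := ell_key n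
  have h2 : (0:ℝ) < (1/4)^(n+1) := by positivity
  linarith
lemma ell_succ_lt (n : ℕ) : ell (n+1) < ell n := by
  have := two_ell_lt n; have := ell_pos (n+1); linarith
lemma ell_le (n : ℕ) : ell n ≤ (1/2)^n := by
  have : ((1:ℝ)/4)^n ≤ (1/2)^n := by
    apply pow_le_pow_left₀ (by norm_num) (by norm_num)
  simp only [ell]; linarith
def aa : ℕ → ℕ → ℝ
  | 0, _ => 0
  | n+1, k => aa n (k/2) + if k % 2 = 1 then ell n - ell (n+1) else 0
lemma aa_nonneg (n k : ℕ) : 0 ≤ aa n k := by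
  induction n generalizing k with
  | zero => simp [aa]
  | succ n ih =>
    simp only [aa]
    have h := ell_succ_lt n
    have := ih (k/2)
    split <;> linarith
lemma aa_add_ell_le_one {n k : ℕ} (hk : k < 2^n) : aa n k + ell n ≤ 1 := by
  induction n generalizing k with
  | zero => simp [aa, ell_zero]
  | succ n ih =>
    have hp : 2^(n+1) = 2 * 2^n := by ring
    have hk2 : k / 2 < 2^n := by omega
    have := ih hk2
    have h := ell_succ_lt n
    simp only [aa]
    split <;> linarith
lemma aa_sep : ∀ n k j, k < j → j < 2^n → aa n k + ell n ≤ aa n j := by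
  intro n
  induction n with
  | zero => intro k j h1 h2; simp at h2; omega
  | succ n ih =>
    intro k j h1 h2
    have hp : 2^(n+1) = 2*2^n := by ring
    have hj2 : j / 2 < 2^n := by omega
    have hkj : k / 2 ≤ j / 2 := Nat.div_le_div_right (le_of_lt h1)
    have h2e := two_ell_lt n
    rcases eq_or_lt_of_le hkj with he | hlt
    · have hk0 : k % 2 = 0 := by omega
      have hj1 : j % 2 = 1 := by omega
      simp only [aa, he, hk0, hj1]
      norm_num
      linarith
    · have := ih (k/2) (j/2) hlt hj2
      simp only [aa]
      have hkd : (if k % 2 = 1 then ell n - ell (n+1) else 0) ≤ ell n - ell (n+1) := by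
        split
        · exact le_refl _
        · linarith [ell_succ_lt n]
      have hjd : (0:ℝ) ≤ (if j % 2 = 1 then ell n - ell (n+1) else 0) := by
        split
        · linarith [ell_succ_lt n]
        · exact le_refl _
      linarith
-- NEW PART
/-- removed open middle interval of interval `(n,k)` -/
def Jio (n k : ℕ) : Set ℝ :=
  Ioo (aa n k + ell (n+1)) (aa n k + ell n - ell (n+1))

lemma child_bounds (n k : ℕ) :
    (aa (n+1) (2*k) = aa n k) ∧ (aa (n+1) (2*k+1) = aa n k + ell n - ell (n+1)) := by
  constructor
  · have h1 : (2*k) / 2 = k := by omega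
    have h2 : (2*k) % 2 = 0 := by omega
    simp [aa, h1, h2]
  · have h1 : (2*k+1) / 2 = k := by omega
    have h2 : (2*k+1) % 2 = 1 := by omega
    simp only [aa, h1, h2, if_pos]
    ring

/-- one-step containment: child interval sits inside parent interval -/
lemma step_bounds (n j : ℕ) :
    aa n (j/2) ≤ aa (n+1) j ∧ aa (n+1) j + ell (n+1) ≤ aa n (j/2) + ell n := by
  simp only [aa]
  have h := ell_succ_lt n
  constructor
  · split <;> linarith
  · split <;> linarith

/-- ancestor containment -/
lemma anc_bounds : ∀ m n j, aa n (j / 2^m) ≤ aa (n+m) j ∧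
    aa (n+m) j + ell (n+m) ≤ aa n (j / 2^m) + ell n := by
  intro m
  induction m with
  | zero => intro n j; simp
  | succ m ih =>
    intro n j
    show aa n (j / 2^(m+1)) ≤ aa (n+m+1) j ∧ aa (n+m+1) j + ell (n+m+1) ≤ aa n (j / 2^(m+1)) + ell n
    have h1 := step_bounds (n+m) j
    have h2 := ih n (j/2)
    have hd : j / 2 / 2^m = j / 2^(m+1) := by
      rw [Nat.div_div_eq_div_mul]; ring_nf
    rw [hd] at h2
    have he := ell_succ_lt (n+m)
    constructor
    · linarith [h1.1, h2.1]
    · have := h1.2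
      have := h2.2
      -- aa (n+m+1) j + ell (n+m+1) ≤ aa (n+m) (j/2) + ell (n+m) ≤ aa n (j/2^(m+1)) + ell n
      calc aa (n+m+1) j + ell (n+m+1) ≤ aa (n+m) (j/2) + ell (n+m) := h1.2
        _ ≤ aa n (j / 2^(m+1)) + ell n := h2.2

lemma Jio_subset_Ioo (n k : ℕ) : Jio n k ⊆ Ioo (aa n k) (aa n k + ell n) := by
  intro x hx
  obtain ⟨h1, h2⟩ := hx
  have := ell_pos (n+1)
  exact ⟨by linarith, by linarith⟩

lemma Jio_subset_unit {n k : ℕ} (hk : k < 2^n) : Jio n k ⊆ Ioo (0:ℝ) 1 := by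
  intro x hx
  have h := Jio_subset_Ioo n k hx
  have h1 := aa_nonneg n k
  have h2 := aa_add_ell_le_one hk
  exact ⟨by linarith [h.1], by linarith [h.2]⟩

lemma Jio_disjoint_aux {n k m j : ℕ} (hk : k < 2^n) (hnm : n < m)
    {x : ℝ} (hx : x ∈ Jio n k) (hj : j < 2^m) (hx' : x ∈ Jio m j) : False := by
  obtain ⟨d, rfl⟩ : ∃ d, m = n+1+d := ⟨m-n-1, by omega⟩
  set j1 := j / 2^d with hj1
  set k0 := j / 2^(d+1) with hk0
  have hIm := Jio_subset_Ioo _ j hx'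
  have hanc := anc_bounds d (n+1) j
  have hanc0 := anc_bounds (d+1) n j
  have heq : n+(d+1) = n+1+d := by omega
  rw [heq] at hanc0
  have xu : x ≤ aa (n+1) j1 + ell (n+1) := by
    have := hIm.2
    linarith [hanc.2]
  have xl : aa (n+1) j1 ≤ x := by linarith [hIm.1, hanc.1]
  obtain ⟨hxl, hxr⟩ := hx
  rcases eq_or_ne k0 k with he | hne0
  · -- j1 is a child of k
    have hj12 : j1 / 2 = k0 := by
      rw [hj1, hk0, Nat.div_div_eq_div_mul, ← pow_succ]
    have hcb := child_bounds n k
    rcases (by omega : j1 = 2*k ∨ j1 = 2*k+1) with h | h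
    · rw [h, hcb.1] at xu; linarith
    · rw [h, hcb.2] at xl; linarith
  · -- different ancestor at level n
    have hk02 : k0 < 2^n := by
      apply Nat.div_lt_of_lt_mul
      have : 2^(d+1) * 2^n = 2^(n+1+d) := by rw [← pow_add]; ring_nf
      omega
    have hxl0 : aa n k0 ≤ x := by linarith [hanc0.1, hIm.1]
    have hxr0 : x ≤ aa n k0 + ell n := by linarith [hanc0.2, hIm.2]
    have he1 := ell_pos (n+1)
    rcases Nat.lt_or_ge k0 k with h | h
    · have := aa_sep n k0 k h hk
      linarith
    · have := aa_sep n k k0 (by omega) hk02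
      linarith

/-- the removed intervals are pairwise disjoint -/
lemma Jio_disjoint {n k m j : ℕ} (hk : k < 2^n) (hj : j < 2^m)
    (hne : (n,k) ≠ (m,j)) {x : ℝ} (hx : x ∈ Jio n k) : x ∉ Jio m j := by
  intro hx'
  rcases lt_trichotomy n m with hnm | rfl | hnm
  · exact Jio_disjoint_aux hk hnm hx hj hx'
  · have hkj : k ≠ j := by simpa using hne
    have h1 := Jio_subset_Ioo n k hx
    have h2 := Jio_subset_Ioo n j hx'
    rcases Nat.lt_or_ge k j with h | h
    · have := aa_sep n k j h hj
      linarith [h1.2, h2.1]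
    · have := aa_sep n j k (by omega) hk
      linarith [h2.2, h1.1]
  · exact Jio_disjoint_aux hj hnm hx' hk hx

/-- trichotomy: every point of `(0,1)` is at every level either in a remaining
interval or in some removed interval -/
lemma mem_level {x : ℝ} (hx : x ∈ Ioo (0:ℝ) 1) (n : ℕ) :
    (∃ k < 2^n, x ∈ Icc (aa n k) (aa n k + ell n)) ∨ (∃ m k, k < 2^m ∧ x ∈ Jio m k) := by
  induction n with
  | zero =>
    left
    refine ⟨0, by norm_num, ?_⟩
    rw [show aa 0 0 = 0 from rfl, ell_zero]
    exact ⟨by linarith [hx.1], by linarith [hx.2]⟩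
  | succ n ih =>
    rcases ih with ⟨k, hk, hxk⟩ | h
    · have hcb := child_bounds n k
      rcases le_or_gt x (aa n k + ell (n+1)) with h1 | h1
      · left
        have hp : 2^(n+1) = 2*2^n := by ring
        refine ⟨2*k, by omega, ?_⟩
        rw [hcb.1]
        exact ⟨hxk.1, h1⟩
      rcases le_or_gt (aa n k + ell n - ell (n+1)) x with h2 | h2
      · left
        have hp : 2^(n+1) = 2*2^n := by ring
        refine ⟨2*k+1, by omega, ?_⟩
        rw [hcb.2]
        exact ⟨h2, by linarith [hxk.2]⟩
      · right
        exact ⟨n, k, hk, h1, h2⟩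
    · right; exact h

/-- covering: near every point of `(0,1)` there is a whole removed interval point -/
lemma exists_J_near {x : ℝ} (hx : x ∈ Ioo (0:ℝ) 1) {ε : ℝ} (hε : 0 < ε) :
    ∃ n k, k < 2^n ∧ ∃ y ∈ Jio n k, |y - x| < ε := by
  obtain ⟨N, hN⟩ : ∃ N : ℕ, (1/2:ℝ)^N < ε := exists_pow_lt_of_lt_one hε (by norm_num)
  have hellN : ell N < ε := lt_of_le_of_lt (ell_le N) hN
  rcases mem_level hx N with ⟨k, hk, hxk⟩ | ⟨m, k, hk, hxk⟩
  · refine ⟨N, k, hk, aa N k + ell N / 2, ?_, ?_⟩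
    · refine mem_Ioo.mpr ⟨?_, ?_⟩
      · have := two_ell_lt N; have := ell_pos (N+1); linarith
      · have := two_ell_lt N; linarith
    · rw [abs_sub_lt_iff]
      have := ell_pos N
      constructor <;> linarith [hxk.1, hxk.2, hellN, this]
  · exact ⟨m, k, hk, x, hxk, by rw [sub_self, abs_zero]; exact hε⟩

open Real


def cl (t : ℝ) : ℝ := max 0 (min 1 t)

lemma cl_of_nonpos {t : ℝ} (h : t ≤ 0) : cl t = 0 := by
  unfold cl
  rw [min_eq_right (by linarith : t ≤ 1)]
  exact max_eq_left h
lemma cl_of_ge {t : ℝ} (h : 1 ≤ t) : cl t = 1 := by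
  unfold cl; rw [min_eq_left h]; exact max_eq_right (by norm_num)
lemma cl_of_mem {t : ℝ} (h0 : 0 ≤ t) (h1 : t ≤ 1) : cl t = t := by
  unfold cl; rw [min_eq_right h1]; exact max_eq_right h0

lemma continuous_cl : Continuous cl := by
  unfold cl; fun_prop

def psi (t : ℝ) : ℝ := sin (2*π*cl t)^3
def Dpsi (t : ℝ) : ℝ := 6*π*(sin (2*π*cl t)^2 * cos (2*π*cl t))
def Psi (t : ℝ) : ℝ := (cos (2*π*cl t) - 1)^2 * (cos (2*π*cl t) + 2) / (6*π)

lemma continuous_Dpsi : Continuous Dpsi := by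
  unfold Dpsi cl; fun_prop

lemma psi_of_nonpos {t : ℝ} (h : t ≤ 0) : psi t = 0 := by
  simp [psi, cl_of_nonpos h]
lemma psi_of_ge {t : ℝ} (h : 1 ≤ t) : psi t = 0 := by
  simp [psi, cl_of_ge h, sin_two_pi]
lemma Dpsi_of_nonpos {t : ℝ} (h : t ≤ 0) : Dpsi t = 0 := by
  simp [Dpsi, cl_of_nonpos h]
lemma Dpsi_of_ge {t : ℝ} (h : 1 ≤ t) : Dpsi t = 0 := by
  simp [Dpsi, cl_of_ge h, sin_two_pi]
lemma Psi_of_nonpos {t : ℝ} (h : t ≤ 0) : Psi t = 0 := by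
  simp [Psi, cl_of_nonpos h]
lemma Psi_of_ge {t : ℝ} (h : 1 ≤ t) : Psi t = 0 := by
  simp [Psi, cl_of_ge h, cos_two_pi]

lemma abs_psi_le (t : ℝ) : |psi t| ≤ 1 := by
  unfold psi
  rw [abs_pow]
  calc |sin (2*π*cl t)|^3 ≤ 1^3 := by
        apply pow_le_pow_left₀ (abs_nonneg _) (abs_sin_le_one _)
    _ = 1 := one_pow 3

lemma abs_Dpsi_le (t : ℝ) : |Dpsi t| ≤ 6*π := by
  unfold Dpsi
  rw [abs_mul]
  have h1 : |6*π| = 6*π := abs_of_pos (by positivity)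
  rw [h1]
  have : |sin (2*π*cl t)^2 * cos (2*π*cl t)| ≤ 1 := by
    rw [abs_mul, abs_pow]
    calc |sin (2*π*cl t)|^2 * |cos (2*π*cl t)| ≤ 1^2 * 1 := by
          apply mul_le_mul
          · exact pow_le_pow_left₀ (abs_nonneg _) (abs_sin_le_one _) 2
          · exact abs_cos_le_one _
          · exact abs_nonneg _
          · norm_num
      _ = 1 := by norm_num
  nlinarith [pi_pos]

lemma abs_Psi_le (t : ℝ) : |Psi t| ≤ 1 := by
  unfold Psi
  rw [abs_div]
  have h1 : |(6:ℝ)*π| = 6*π := abs_of_pos (by positivity)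
  rw [h1, div_le_iff₀ (by positivity)]
  have hc := neg_one_le_cos (2*π*cl t)
  have hc2 := cos_le_one (2*π*cl t)
  rw [abs_mul]
  have e1 : |(cos (2*π*cl t) - 1)^2| ≤ 4 := by rw [abs_of_nonneg (sq_nonneg _)]; nlinarith
  have e2 : |cos (2*π*cl t) + 2| ≤ 3 := by rw [abs_of_nonneg (by linarith)]; linarith
  nlinarith [pi_gt_three, abs_nonneg ((cos (2*π*cl t) - 1)^2), abs_nonneg (cos (2*π*cl t) + 2)]



open Asymptotics Filter

/-- squeeze lemma: quadratic bound gives vanishing derivative -/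
lemma hasDerivAt_of_sq_bound {f : ℝ → ℝ} {t C : ℝ}
    (h : ∀ s, |f s| ≤ C * (s - t)^2) : HasDerivAt f 0 t := by
  have hf0 : f t = 0 := by
    have := h t
    simp at this
    exact abs_eq_zero.mp (le_antisymm (by simpa using this) (abs_nonneg _))
  rw [hasDerivAt_iff_isLittleO]
  simp only [hf0, smul_zero, sub_zero]
  have h1 : (fun s => f s) =O[nhds t] (fun s => ‖s - t‖^2) := by
    apply isBigO_of_le' (c := C)
    intro x
    have e : ‖(‖x - t‖^2)‖ = (x - t)^2 := by
      rw [Real.norm_eq_abs, Real.norm_eq_abs, abs_of_nonneg (by positivity), sq_abs]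
    rw [Real.norm_eq_abs, e]
    exact h x
  exact h1.trans_isLittleO (isLittleO_pow_sub_sub t one_lt_two)

lemma one_sub_cos_le_sq (x : ℝ) : 1 - cos x ≤ x^2/2 := by
  have := Real.one_sub_sq_div_two_le_cos (x := x)
  linarith

-- smooth model derivative lemmas
lemma hasDerivAt_model_psi (s : ℝ) :
    HasDerivAt (fun y => sin (2*π*y)^3) (6*π*(sin (2*π*s)^2 * cos (2*π*s))) s := by
  have h1 : HasDerivAt (fun y : ℝ => 2*π*y) (2*π) s := by
    simpa using (hasDerivAt_id s).const_mul (2*π)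
  have h2 : HasDerivAt (fun y => sin (2*π*y)) (cos (2*π*s) * (2*π)) s :=
    (Real.hasDerivAt_sin (2*π*s)).comp s h1
  have h3 := h2.pow 3
  refine h3.congr_deriv ?_
  ring

lemma hasDerivAt_model_Psi (s : ℝ) :
    HasDerivAt (fun y => (cos (2*π*y) - 1)^2 * (cos (2*π*y) + 2) / (6*π))
      (sin (2*π*s)^3) s := by
  have h1 : HasDerivAt (fun y : ℝ => 2*π*y) (2*π) s := by
    simpa using (hasDerivAt_id s).const_mul (2*π)
  have h2 : HasDerivAt (fun y => cos (2*π*y)) (-sin (2*π*s) * (2*π)) s :=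
    (Real.hasDerivAt_cos (2*π*s)).comp s h1
  have h3 := (((h2.sub_const 1).pow 2).mul (h2.add_const 2)).div_const (6*π)
  refine h3.congr_deriv ?_
  have hpy := sin_sq_add_cos_sq (2*π*s)
  have hπ : π ≠ 0 := by positivity
  simp only [Pi.pow_apply]
  field_simp
  linear_combination (-6*sin (2*π*s)) * hpy



open Filter

lemma abs_sin_cube_le (y : ℝ) : |sin y ^ 3| ≤ |y|^3 := by
  rw [abs_pow]
  exact pow_le_pow_left₀ (abs_nonneg _) (abs_sin_le_abs) 3

lemma psi_bound0 (s : ℝ) : |psi s| ≤ 8*π^3 * (s - 0)^2 := by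
  have hπ := pi_gt_three
  rcases le_or_gt s 0 with h | h
  · rw [psi_of_nonpos h, abs_zero]; positivity
  rcases le_or_gt 1 s with h1 | h1
  · rw [psi_of_ge h1, abs_zero]; positivity
  · unfold psi
    rw [cl_of_mem (le_of_lt h) (le_of_lt h1)]
    calc |sin (2*π*s)^3| ≤ |2*π*s|^3 := abs_sin_cube_le _
      _ = 8*π^3*s^3 := by
          rw [abs_of_pos (by positivity)]; ring
      _ ≤ 8*π^3 * (s-0)^2 := by
          rw [sub_zero]
          have hs : s^3 ≤ s^2 := by nlinarith
          exact mul_le_mul_of_nonneg_left hs (by positivity)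

lemma psi_bound1 (s : ℝ) : |psi s| ≤ 8*π^3 * (s - 1)^2 := by
  have hπ := pi_gt_three
  rcases le_or_gt s 0 with h | h
  · rw [psi_of_nonpos h, abs_zero]; positivity
  rcases le_or_gt 1 s with h1 | h1
  · rw [psi_of_ge h1, abs_zero]; positivity
  · unfold psi
    rw [cl_of_mem (le_of_lt h) (le_of_lt h1)]
    have hper : sin (2*π*s) = sin (2*π*(s-1)) := by
      rw [show 2*π*s = 2*π*(s-1) + 2*π by ring, sin_add_two_pi]
    rw [hper]
    calc |sin (2*π*(s-1))^3| ≤ |2*π*(s-1)|^3 := abs_sin_cube_le _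
      _ = 8*π^3*|s-1|^3 := by
          rw [abs_mul, abs_of_pos (show (0:ℝ) < 2*π by positivity)]
          ring
      _ ≤ 8*π^3 * (s-1)^2 := by
          have h2 : |s-1| ≤ 1 := by rw [abs_le]; constructor <;> linarith
          have h3 : |s-1|^3 ≤ |s-1|^2 := by
            apply pow_le_pow_of_le_one (abs_nonneg _) h2; omega
          rw [← sq_abs]
          exact mul_le_mul_of_nonneg_left h3 (by positivity)

lemma Psi_bound0 (s : ℝ) : |Psi s| ≤ 2*π^3 * (s - 0)^2 := by
  have hπ := pi_gt_three
  rcases le_or_gt s 0 with h | h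
  · rw [Psi_of_nonpos h, abs_zero]; positivity
  rcases le_or_gt 1 s with h1 | h1
  · rw [Psi_of_ge h1, abs_zero]; positivity
  · unfold Psi
    rw [cl_of_mem (le_of_lt h) (le_of_lt h1)]
    have hc1 : 1 - cos (2*π*s) ≤ (2*π*s)^2/2 := one_sub_cos_le_sq _
    have hc0 : 0 ≤ 1 - cos (2*π*s) := by linarith [cos_le_one (2*π*s)]
    have hc2 : cos (2*π*s) + 2 ≤ 3 := by linarith [cos_le_one (2*π*s)]
    have hc3 : 0 ≤ cos (2*π*s) + 2 := by linarith [neg_one_le_cos (2*π*s)]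
    rw [abs_div, abs_of_pos (show (0:ℝ) < 6*π by positivity), abs_mul,
      abs_of_nonneg (sq_nonneg _), abs_of_nonneg hc3, div_le_iff₀ (by positivity)]
    have e1 : (cos (2*π*s) - 1)^2 ≤ (2*π^2*s^2)^2 := by nlinarith
    have hA : (cos (2*π*s) - 1)^2 * (cos (2*π*s) + 2) ≤ (2*π^2*s^2)^2 * 3 :=
      mul_le_mul e1 hc2 hc3 (by positivity)
    have hs2 : s^2 ≤ 1 := by nlinarith
    have hs4 : s^4 ≤ s^2 := by nlinarith [sq_nonneg s, mul_le_mul_of_nonneg_left hs2 (sq_nonneg s)]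
    rw [sub_zero]
    have hB : (2*π^2*s^2)^2 * 3 = 12*π^4*s^4 := by ring
    have hC : 12*π^4*s^4 ≤ 12*π^4*s^2 := mul_le_mul_of_nonneg_left hs4 (by positivity)
    have hD : 12*π^4*s^2 ≤ 2*π^3*s^2*(6*π) := by ring_nf; nlinarith [sq_nonneg s]
    linarith



open Filter

lemma Psi_bound1 (s : ℝ) : |Psi s| ≤ 2*π^3 * (s - 1)^2 := by
  have hπ := pi_gt_three
  rcases le_or_gt s 0 with h | h
  · rw [Psi_of_nonpos h, abs_zero]; positivity
  rcases le_or_gt 1 s with h1 | h1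
  · rw [Psi_of_ge h1, abs_zero]; positivity
  · unfold Psi
    rw [cl_of_mem (le_of_lt h) (le_of_lt h1)]
    have hper : cos (2*π*s) = cos (2*π*(s-1)) := by
      rw [show 2*π*s = 2*π*(s-1) + 2*π by ring, cos_add_two_pi]
    rw [hper]
    set y := s - 1 with hy
    have hy1 : y^2 ≤ 1 := by rw [hy]; nlinarith
    have hc1 : 1 - cos (2*π*y) ≤ (2*π*y)^2/2 := one_sub_cos_le_sq _
    have hc0 : 0 ≤ 1 - cos (2*π*y) := by linarith [cos_le_one (2*π*y)]
    have hc2 : cos (2*π*y) + 2 ≤ 3 := by linarith [cos_le_one (2*π*y)]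
    have hc3 : 0 ≤ cos (2*π*y) + 2 := by linarith [neg_one_le_cos (2*π*y)]
    rw [abs_div, abs_of_pos (show (0:ℝ) < 6*π by positivity), abs_mul,
      abs_of_nonneg (sq_nonneg _), abs_of_nonneg hc3, div_le_iff₀ (by positivity)]
    have h2' : 1 - cos (2*π*y) ≤ 2*π^2*y^2 := by ring_nf at hc1 ⊢; linarith
    have e1 : (cos (2*π*y) - 1)^2 ≤ (2*π^2*y^2)^2 := by
      have := pow_le_pow_left₀ hc0 h2' 2
      calc (cos (2*π*y) - 1)^2 = (1 - cos (2*π*y))^2 := by ring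
        _ ≤ (2*π^2*y^2)^2 := this
    have hA : (cos (2*π*y) - 1)^2 * (cos (2*π*y) + 2) ≤ (2*π^2*y^2)^2 * 3 :=
      mul_le_mul e1 hc2 hc3 (by positivity)
    have hy4 : y^4 ≤ y^2 := by nlinarith [sq_nonneg y, mul_le_mul_of_nonneg_left hy1 (sq_nonneg y)]
    have hB : (2*π^2*y^2)^2 * 3 = 12*π^4*y^4 := by ring
    have hC : 12*π^4*y^4 ≤ 12*π^4*y^2 := mul_le_mul_of_nonneg_left hy4 (by positivity)
    have hD : 12*π^4*y^2 ≤ 2*π^3*y^2*(6*π) := by ring_nf; nlinarith [sq_nonneg y]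
    linarith

lemma hasDerivAt_Psi (t : ℝ) : HasDerivAt Psi (psi t) t := by
  rcases lt_trichotomy t 0 with ht | rfl | ht
  · rw [psi_of_nonpos (le_of_lt ht)]
    apply (hasDerivAt_const t (0:ℝ)).congr_of_eventuallyEq
    filter_upwards [Iio_mem_nhds ht] with s hs
    exact Psi_of_nonpos (le_of_lt hs)
  · rw [show psi 0 = 0 from psi_of_nonpos (le_refl _)]
    exact hasDerivAt_of_sq_bound (C := 2*π^3) Psi_bound0
  rcases lt_trichotomy t 1 with ht1 | rfl | ht1
  · have : psi t = sin (2*π*t)^3 := by rw [psi, cl_of_mem (le_of_lt ht) (le_of_lt ht1)]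
    rw [this]
    apply (hasDerivAt_model_Psi t).congr_of_eventuallyEq
    filter_upwards [Ioo_mem_nhds ht ht1] with s hs
    rw [Psi, cl_of_mem (le_of_lt hs.1) (le_of_lt hs.2)]
  · rw [show psi 1 = 0 from psi_of_ge (le_refl _)]
    exact hasDerivAt_of_sq_bound (C := 2*π^3) Psi_bound1
  · rw [psi_of_ge (le_of_lt ht1)]
    apply (hasDerivAt_const t (0:ℝ)).congr_of_eventuallyEq
    filter_upwards [Ioi_mem_nhds ht1] with s hs
    exact Psi_of_ge (le_of_lt hs)

lemma hasDerivAt_psi (t : ℝ) : HasDerivAt psi (Dpsi t) t := by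
  rcases lt_trichotomy t 0 with ht | rfl | ht
  · rw [Dpsi_of_nonpos (le_of_lt ht)]
    apply (hasDerivAt_const t (0:ℝ)).congr_of_eventuallyEq
    filter_upwards [Iio_mem_nhds ht] with s hs
    exact psi_of_nonpos (le_of_lt hs)
  · rw [show Dpsi 0 = 0 from Dpsi_of_nonpos (le_refl _)]
    exact hasDerivAt_of_sq_bound (C := 8*π^3) psi_bound0
  rcases lt_trichotomy t 1 with ht1 | rfl | ht1
  · have : Dpsi t = 6*π*(sin (2*π*t)^2 * cos (2*π*t)) := by
      rw [Dpsi, cl_of_mem (le_of_lt ht) (le_of_lt ht1)]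
    rw [this]
    apply (hasDerivAt_model_psi t).congr_of_eventuallyEq
    filter_upwards [Ioo_mem_nhds ht ht1] with s hs
    rw [psi, cl_of_mem (le_of_lt hs.1) (le_of_lt hs.2)]
  · rw [show Dpsi 1 = 0 from Dpsi_of_ge (le_refl _)]
    exact hasDerivAt_of_sq_bound (C := 8*π^3) psi_bound1
  · rw [Dpsi_of_ge (le_of_lt ht1)]
    apply (hasDerivAt_const t (0:ℝ)).congr_of_eventuallyEq
    filter_upwards [Ioi_mem_nhds ht1] with s hs
    exact psi_of_ge (le_of_lt hs)



end SVCX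

namespace SVCX
open Filter Asymptotics

/-! ### scaled bump terms -/

def Lp (n : ℕ) : ℝ := (1/4)^(n+1)
def alp (n k : ℕ) : ℝ := aa n k + ell (n+1)

lemma Lp_pos (n : ℕ) : 0 < Lp n := by unfold Lp; positivity

lemma Jio_eq (n k : ℕ) : Jio n k = Ioo (alp n k) (alp n k + Lp n) := by
  unfold Jio alp Lp
  have h := ell_key n
  rw [show aa n k + ell n - ell (n+1) = aa n k + ell (n+1) + (1/4:ℝ)^(n+1) from by linarith]

def Ut (p : ℕ × ℕ) (x : ℝ) : ℝ :=
  if p.2 < 2^p.1 then (Lp p.1)^3 * Psi ((x - alp p.1 p.2)/Lp p.1) else 0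
def Gt (p : ℕ × ℕ) (x : ℝ) : ℝ :=
  if p.2 < 2^p.1 then (Lp p.1)^2 * psi ((x - alp p.1 p.2)/Lp p.1) else 0
def Ft (p : ℕ × ℕ) (x : ℝ) : ℝ :=
  if p.2 < 2^p.1 then (Lp p.1) * Dpsi ((x - alp p.1 p.2)/Lp p.1) else 0

lemma hasDerivAt_inner (n k : ℕ) (x : ℝ) :
    HasDerivAt (fun y => (y - alp n k)/Lp n) (1/Lp n) x := by
  simpa using ((hasDerivAt_id x).sub_const (alp n k)).div_const (Lp n)

lemma hasDerivAt_Ut (p : ℕ × ℕ) (x : ℝ) : HasDerivAt (Ut p) (Gt p x) x := by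
  unfold Ut Gt
  split
  · have h1 := (hasDerivAt_Psi ((x - alp p.1 p.2)/Lp p.1)).comp x (hasDerivAt_inner p.1 p.2 x)
    have h2 := h1.const_mul ((Lp p.1)^3)
    refine h2.congr_deriv ?_
    have hL := Lp_pos p.1
    field_simp
  · exact hasDerivAt_const x 0

lemma hasDerivAt_Gt (p : ℕ × ℕ) (x : ℝ) : HasDerivAt (Gt p) (Ft p x) x := by
  unfold Gt Ft
  split
  · have h1 := (hasDerivAt_psi ((x - alp p.1 p.2)/Lp p.1)).comp x (hasDerivAt_inner p.1 p.2 x)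
    have h2 := h1.const_mul ((Lp p.1)^2)
    refine h2.congr_deriv ?_
    have hL := Lp_pos p.1
    field_simp
  · exact hasDerivAt_const x 0

/-! ### weights and summability -/

def wU (p : ℕ × ℕ) : ℝ := if p.2 < 2^p.1 then (Lp p.1)^3 else 0
def wG (p : ℕ × ℕ) : ℝ := if p.2 < 2^p.1 then (Lp p.1)^2 else 0
def wF (p : ℕ × ℕ) : ℝ := if p.2 < 2^p.1 then 6*π*Lp p.1 else 0

lemma norm_Ut_le (p : ℕ × ℕ) (x : ℝ) : ‖Ut p x‖ ≤ wU p := by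
  unfold Ut wU
  split
  · rw [Real.norm_eq_abs, abs_mul, abs_of_pos (pow_pos (Lp_pos p.1) 3)]
    nlinarith [abs_Psi_le ((x - alp p.1 p.2)/Lp p.1), abs_nonneg (Psi ((x - alp p.1 p.2)/Lp p.1)),
      pow_pos (Lp_pos p.1) 3]
  · simp

lemma norm_Gt_le (p : ℕ × ℕ) (x : ℝ) : ‖Gt p x‖ ≤ wG p := by
  unfold Gt wG
  split
  · rw [Real.norm_eq_abs, abs_mul, abs_of_pos (pow_pos (Lp_pos p.1) 2)]
    nlinarith [abs_psi_le ((x - alp p.1 p.2)/Lp p.1), abs_nonneg (psi ((x - alp p.1 p.2)/Lp p.1)),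
      pow_pos (Lp_pos p.1) 2]
  · simp

lemma norm_Ft_le (p : ℕ × ℕ) (x : ℝ) : ‖Ft p x‖ ≤ wF p := by
  unfold Ft wF
  split
  · rw [Real.norm_eq_abs, abs_mul, abs_of_pos (Lp_pos p.1)]
    calc Lp p.1 * |Dpsi ((x - alp p.1 p.2)/Lp p.1)| ≤ Lp p.1 * (6*π) :=
          mul_le_mul_of_nonneg_left (abs_Dpsi_le _) (le_of_lt (Lp_pos p.1))
      _ = 6*π*Lp p.1 := by ring
  · simp

lemma summable_gate (C : ℝ) (hC : 0 ≤ C) :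
    Summable (fun p : ℕ × ℕ => if p.2 < 2^p.1 then C*(1/4:ℝ)^p.1 else 0) := by
  apply (summable_prod_of_nonneg ?_).2
  · constructor
    · intro n
      apply summable_of_ne_finset_zero (s := Finset.range (2^n))
      intro k hk
      simp only [Finset.mem_range, not_lt] at hk
      simp [Nat.not_lt.mpr hk]
    · apply Summable.congr (f := fun n : ℕ => C*(1/2:ℝ)^n)
      · exact (summable_geometric_of_lt_one (by norm_num) (by norm_num)).mul_left C
      · intro n
        rw [tsum_eq_sum (s := Finset.range (2^n)) (by intro k hk; simp only [Finset.mem_range, not_lt] at hk; simp [Nat.not_lt.mpr hk])]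
        have h1 : ∀ x ∈ Finset.range (2^n), (if ((n,x) : ℕ × ℕ).2 < 2^((n,x) : ℕ × ℕ).1 then C*(1/4:ℝ)^((n,x) : ℕ × ℕ).1 else 0) = C*(1/4:ℝ)^n := by
          intro x hx
          simp [Finset.mem_range.mp hx]
        rw [Finset.sum_congr rfl h1, Finset.sum_const, Finset.card_range, nsmul_eq_mul]
        push_cast
        rw [show ((2:ℝ)^n)*(C*(1/4)^n) = C*((2*(1/4:ℝ))^n) by rw [mul_pow]; ring]
        norm_num
  · intro p
    dsimp only
    split
    · positivity
    · exact le_refl 0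

lemma summable_wU : Summable wU := by
  refine Summable.of_nonneg_of_le ?_ ?_ (summable_gate 1 zero_le_one)
  · intro p; unfold wU; split
    · exact le_of_lt (pow_pos (Lp_pos p.1) 3)
    · exact le_refl 0
  · intro p
    unfold wU Lp
    split
    · rw [one_mul, ← pow_mul]
      apply pow_le_pow_of_le_one (by norm_num) (by norm_num)
      omega
    · exact le_refl 0

lemma summable_wG : Summable wG := by
  refine Summable.of_nonneg_of_le ?_ ?_ (summable_gate 1 zero_le_one)
  · intro p; unfold wG; split
    · exact le_of_lt (pow_pos (Lp_pos p.1) 2)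
    · exact le_refl 0
  · intro p
    unfold wG Lp
    split
    · rw [one_mul, ← pow_mul]
      apply pow_le_pow_of_le_one (by norm_num) (by norm_num)
      omega
    · exact le_refl 0

lemma summable_wF : Summable wF := by
  refine Summable.of_nonneg_of_le ?_ ?_ (summable_gate (6*π) (by positivity))
  · intro p; unfold wF; split
    · have h1 := Lp_pos p.1
      have h2 := pi_pos
      nlinarith
    · exact le_refl 0
  · intro p
    unfold wF Lp
    split
    · rw [pow_succ]
      have h4 : ((1:ℝ)/4)^p.1 * (1/4) ≤ (1/4)^p.1 := by
        have : (0:ℝ) ≤ (1/4)^p.1 := by positivity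
        nlinarith
      calc 6*π*((1/4:ℝ)^p.1 * (1/4)) ≤ 6*π*(1/4)^p.1 :=
            mul_le_mul_of_nonneg_left h4 (by positivity)
        _ = 6*π*(1/4)^p.1 := rfl
    · exact le_refl 0

lemma summable_Ut (x : ℝ) : Summable fun p => Ut p x :=
  Summable.of_norm_bounded summable_wU (fun p => norm_Ut_le p x)
lemma summable_Gt (x : ℝ) : Summable fun p => Gt p x :=
  Summable.of_norm_bounded summable_wG (fun p => norm_Gt_le p x)
lemma summable_Ft (x : ℝ) : Summable fun p => Ft p x :=
  Summable.of_norm_bounded summable_wF (fun p => norm_Ft_le p x)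

/-! ### the functions -/

def uu (x : ℝ) : ℝ := ∑' p : ℕ × ℕ, Ut p x
def gg (x : ℝ) : ℝ := ∑' p : ℕ × ℕ, Gt p x
def ff (x : ℝ) : ℝ := -∑' p : ℕ × ℕ, Ft p x

lemma hasDerivAt_uu (x : ℝ) : HasDerivAt uu (gg x) x := by
  unfold uu gg
  exact hasDerivAt_tsum summable_wG hasDerivAt_Ut (fun p y => norm_Gt_le p y)
    (summable_Ut 0) x

lemma hasDerivAt_gg (x : ℝ) : HasDerivAt gg (-ff x) x := by
  have h := hasDerivAt_tsum summable_wF hasDerivAt_Gt (fun p y => norm_Ft_le p y)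
    (summable_Gt 0) x
  unfold gg ff
  simpa using h

lemma continuous_Ft (p : ℕ × ℕ) : Continuous (Ft p) := by
  unfold Ft
  split
  · exact continuous_const.mul (continuous_Dpsi.comp (by fun_prop))
  · exact continuous_const

lemma continuous_ff : Continuous ff := by
  unfold ff
  exact (continuous_tsum continuous_Ft summable_wF (fun p x => norm_Ft_le p x)).neg

lemma continuous_gg : Continuous gg := by
  have : Differentiable ℝ gg := fun x => (hasDerivAt_gg x).differentiableAt
  exact this.continuous

/-! ### vanishing off the removed intervals -/

lemma Gt_eq_zero {p : ℕ × ℕ} {x : ℝ} (hx : x ∉ Jio p.1 p.2) : Gt p x = 0 := by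
  unfold Gt
  split
  · rw [Jio_eq, mem_Ioo, not_and_or, not_lt, not_lt] at hx
    have hL := Lp_pos p.1
    rcases hx with h | h
    · rw [psi_of_nonpos (by apply div_nonpos_of_nonpos_of_nonneg <;> linarith), mul_zero]
    · rw [psi_of_ge (by rw [le_div_iff₀ hL]; linarith), mul_zero]
  · rfl

lemma Ft_eq_zero {p : ℕ × ℕ} {x : ℝ} (hx : x ∉ Jio p.1 p.2) : Ft p x = 0 := by
  unfold Ft
  split
  · rw [Jio_eq, mem_Ioo, not_and_or, not_lt, not_lt] at hx
    have hL := Lp_pos p.1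
    rcases hx with h | h
    · rw [Dpsi_of_nonpos (by apply div_nonpos_of_nonpos_of_nonneg <;> linarith), mul_zero]
    · rw [Dpsi_of_ge (by rw [le_div_iff₀ hL]; linarith), mul_zero]
  · rfl

def Jset (p : ℕ × ℕ) : Set ℝ := if p.2 < 2^p.1 then Jio p.1 p.2 else ∅

lemma gg_eq_zero {x : ℝ} (hx : x ∉ ⋃ p : ℕ × ℕ, Jset p) : gg x = 0 := by
  have h : ∀ p : ℕ × ℕ, Gt p x = 0 := by
    intro p
    by_cases hp : p.2 < 2^p.1
    · apply Gt_eq_zero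
      intro hmem
      exact hx (mem_iUnion.2 ⟨p, by simpa [Jset, hp] using hmem⟩)
    · simp [Gt, hp]
  unfold gg
  rw [tsum_congr h, tsum_zero]

end SVCX

namespace SVCX
open Filter intervalIntegral
open scoped ENNReal

lemma Ut_zero (p : ℕ × ℕ) : Ut p 0 = 0 := by
  unfold Ut
  split
  · have ha := aa_nonneg p.1 p.2
    have he := ell_pos (p.1+1)
    have hL := Lp_pos p.1
    rw [Psi_of_nonpos ?_, mul_zero]
    apply div_nonpos_of_nonpos_of_nonneg
    · unfold alp; linarith
    · linarith
  · rfl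

lemma alp_add_Lp_le_one {p : ℕ × ℕ} (hp : p.2 < 2^p.1) : alp p.1 p.2 + Lp p.1 ≤ 1 := by
  have h1 := aa_add_ell_le_one hp
  have h2 := ell_pos (p.1+1)
  have hk := ell_key p.1
  unfold alp Lp
  linarith

lemma Ut_one (p : ℕ × ℕ) : Ut p 1 = 0 := by
  unfold Ut
  split
  · rename_i hp
    have hL := Lp_pos p.1
    have h1 : alp p.1 p.2 + Lp p.1 ≤ 1 := alp_add_Lp_le_one hp
    rw [Psi_of_ge ?_, mul_zero]
    rw [le_div_iff₀ hL]
    linarith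
  · rfl

lemma uu_zero : uu 0 = 0 := by unfold uu; rw [tsum_congr Ut_zero, tsum_zero]
lemma uu_one : uu 1 = 0 := by unfold uu; rw [tsum_congr Ut_one, tsum_zero]

lemma abs_gg_le (x : ℝ) : |gg x| ≤ ∑' p : ℕ × ℕ, wG p := by
  unfold gg
  have h1 : Summable fun p : ℕ × ℕ => ‖Gt p x‖ :=
    Summable.of_nonneg_of_le (fun p => norm_nonneg _) (fun p => norm_Gt_le p x) summable_wG
  calc |∑' p : ℕ × ℕ, Gt p x| = ‖∑' p : ℕ × ℕ, Gt p x‖ := (Real.norm_eq_abs _).symm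
    _ ≤ ∑' p : ℕ × ℕ, ‖Gt p x‖ := norm_tsum_le_tsum_norm h1
    _ ≤ ∑' p : ℕ × ℕ, wG p := Summable.tsum_le_tsum (fun p => norm_Gt_le p x) h1 summable_wG

lemma abs_ff_le (x : ℝ) : |ff x| ≤ ∑' p : ℕ × ℕ, wF p := by
  unfold ff
  rw [abs_neg]
  have h1 : Summable fun p : ℕ × ℕ => ‖Ft p x‖ :=
    Summable.of_nonneg_of_le (fun p => norm_nonneg _) (fun p => norm_Ft_le p x) summable_wF
  calc |∑' p : ℕ × ℕ, Ft p x| = ‖∑' p : ℕ × ℕ, Ft p x‖ := (Real.norm_eq_abs _).symm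
    _ ≤ ∑' p : ℕ × ℕ, ‖Ft p x‖ := norm_tsum_le_tsum_norm h1
    _ ≤ ∑' p : ℕ × ℕ, wF p := Summable.tsum_le_tsum (fun p => norm_Ft_le p x) h1 summable_wF

lemma ff_on_J {n k : ℕ} (hk : k < 2^n) {x : ℝ} (hx : x ∈ Jio n k) :
    ff x = -(Lp n * Dpsi ((x - alp n k)/Lp n)) := by
  unfold ff
  congr 1
  rw [tsum_eq_single ((n,k) : ℕ × ℕ) ?_]
  · simp only [Ft, hk, if_pos]
  · intro q hq
    by_cases hq2 : q.2 < 2^q.1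
    · refine Ft_eq_zero ?_
      have hne : (n,k) ≠ (q.1, q.2) := by
        intro hcon
        rw [Prod.mk.eta] at hcon
        exact hq hcon.symm
      exact Jio_disjoint hk hq2 hne hx
    · simp [Ft, hq2]

/-! ### measure of the union of removed intervals -/

lemma measurable_Jset (p : ℕ × ℕ) : MeasurableSet (Jset p) := by
  unfold Jset
  split
  · rw [Jio_eq]; exact measurableSet_Ioo
  · exact MeasurableSet.empty

lemma vol_JU_le : volume (⋃ p : ℕ × ℕ, Jset p) ≤ 1/2 := by
  refine le_trans (measure_iUnion_le _) ?_
  have hvol : ∀ p : ℕ × ℕ, volume (Jset p) =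
      if p.2 < 2^p.1 then ENNReal.ofReal ((1/4:ℝ)^(p.1+1)) else 0 := by
    intro p
    unfold Jset
    split
    · rw [Jio_eq, Real.volume_Ioo]
      congr 1
      unfold Lp
      ring
    · simp
  rw [tsum_congr hvol, ENNReal.tsum_prod']
  have hinner : ∀ n : ℕ,
      (∑' k : ℕ, if (((n,k) : ℕ × ℕ)).2 < 2^(((n,k) : ℕ × ℕ)).1
        then ENNReal.ofReal ((1/4:ℝ)^((((n,k) : ℕ × ℕ)).1+1)) else 0)
      = (2:ℝ≥0∞)^n * ENNReal.ofReal ((1/4:ℝ)^(n+1)) := by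
    intro n
    rw [tsum_eq_sum (s := Finset.range (2^n))
      (by intro k hk; simp only [Finset.mem_range, not_lt] at hk; simp [Nat.not_lt.mpr hk])]
    have hterm : ∀ k ∈ Finset.range (2^n),
        (if (((n,k) : ℕ × ℕ)).2 < 2^(((n,k) : ℕ × ℕ)).1
          then ENNReal.ofReal ((1/4:ℝ)^((((n,k) : ℕ × ℕ)).1+1)) else 0)
        = ENNReal.ofReal ((1/4:ℝ)^(n+1)) := by
      intro k hk
      rw [if_pos (by simpa using Finset.mem_range.mp hk)]
    rw [Finset.sum_congr rfl hterm, Finset.sum_const, Finset.card_range, nsmul_eq_mul]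
    push_cast
    ring
  rw [tsum_congr hinner]
  -- geometric computation
  have h2 : ENNReal.ofReal (1/4:ℝ) = 2⁻¹ * 2⁻¹ := by
    rw [show (1/4:ℝ) = (4:ℝ)⁻¹ by norm_num, ENNReal.ofReal_inv_of_pos (by norm_num)]
    norm_num
    rw [show (4:ℝ≥0∞) = 2*2 by norm_num, ENNReal.mul_inv (by norm_num) (by norm_num)]
  have h : ∀ n : ℕ, (2:ℝ≥0∞)^n * ENNReal.ofReal ((1/4:ℝ)^(n+1)) = (2⁻¹:ℝ≥0∞)^(n+2) := by
    intro n
    rw [ENNReal.ofReal_pow (by norm_num), h2]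
    rw [mul_pow, pow_succ, pow_succ, pow_succ]
    rw [show ((2:ℝ≥0∞)^n * (2⁻¹^n * 2⁻¹ * (2⁻¹^n * 2⁻¹))) = (2*2⁻¹)^n * 2⁻¹^n * 2⁻¹ * 2⁻¹ by
      rw [mul_pow]; ring]
    rw [ENNReal.mul_inv_cancel (by norm_num) (by norm_num), one_pow, one_mul]
  rw [tsum_congr h]
  have h3 : ∀ n : ℕ, (2⁻¹:ℝ≥0∞)^(n+2) = 2⁻¹ * 2⁻¹^(n+1) := by
    intro n; rw [pow_succ, pow_succ]; ring
  rw [tsum_congr h3, ENNReal.tsum_mul_left, ENNReal.tsum_geometric_add_one,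
    ENNReal.one_sub_inv_two, inv_inv]
  rw [ENNReal.inv_mul_cancel (by norm_num) (by norm_num), mul_one, one_div]

lemma vol_diff_pos : 0 < volume (Ioo (0:ℝ) 1 \ ⋃ p : ℕ × ℕ, Jset p) := by
  have h1 : volume (Ioo (0:ℝ) 1) = 1 := by simp [Real.volume_Ioo]
  have h3 : (1:ℝ≥0∞) - 1/2 ≤ volume (Ioo (0:ℝ) 1) - volume (⋃ p : ℕ × ℕ, Jset p) := by
    rw [h1]; exact tsub_le_tsub le_rfl vol_JU_le
  have h4 := le_measure_diff (μ := volume) (s₁ := Ioo (0:ℝ) 1) (s₂ := ⋃ p : ℕ × ℕ, Jset p)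
  have h5 : (0:ℝ≥0∞) < 1 - 1/2 := by
    rw [one_div, ENNReal.one_sub_inv_two]
    simp
  exact lt_of_lt_of_le h5 (le_trans h3 h4)

/-! ### integration by parts -/

lemma weak_form (v : ℝ → ℝ) (hv : ContDiff ℝ (⊤ : ℕ∞) v)
    (hsupp : tsupport v ⊆ Ioo (0:ℝ) 1) :
    (∫ x in Ioo (0:ℝ) 1, gg x * deriv v x) = ∫ x in Ioo (0:ℝ) 1, ff x * v x := by
  have hv0 : v 0 = 0 := by
    apply image_eq_zero_of_notMem_tsupport
    intro h
    have := hsupp h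
    simp at this
  have hv1 : v 1 = 0 := by
    apply image_eq_zero_of_notMem_tsupport
    intro h
    have := hsupp h
    simp at this
  have hvd : ∀ x : ℝ, HasDerivAt v (deriv v x) x :=
    fun x => ((hv.differentiable (by simp)) x).hasDerivAt
  have cv : Continuous v := hv.continuous
  have cdv : Continuous (deriv v) := hv.continuous_deriv (by simp)
  have H : ∀ x ∈ uIcc (0:ℝ) 1,
      HasDerivAt (fun y => gg y * v y) (-ff x * v x + gg x * deriv v x) x :=
    fun x _ => (hasDerivAt_gg x).mul (hvd x)
  have hcont : Continuous fun x => -ff x * v x + gg x * deriv v x :=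
    ((continuous_ff.neg.mul cv).add (continuous_gg.mul cdv))
  have hint : IntervalIntegrable (fun x => -ff x * v x + gg x * deriv v x) volume 0 1 :=
    hcont.intervalIntegrable 0 1
  have I := integral_eq_sub_of_hasDerivAt H hint
  rw [hv0, hv1, mul_zero, mul_zero, sub_zero] at I
  have hint1 : IntervalIntegrable (fun x => -ff x * v x) volume 0 1 :=
    (continuous_ff.neg.mul cv).intervalIntegrable 0 1
  have hint2 : IntervalIntegrable (fun x => gg x * deriv v x) volume 0 1 :=
    (continuous_gg.mul cdv).intervalIntegrable 0 1
  rw [integral_add hint1 hint2] at I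
  have I2 : (∫ x in (0:ℝ)..1, gg x * deriv v x) = ∫ x in (0:ℝ)..1, ff x * v x := by
    have : (∫ x in (0:ℝ)..1, -ff x * v x) = -∫ x in (0:ℝ)..1, ff x * v x := by
      rw [← intervalIntegral.integral_neg]
      congr 1
      ext x
      ring
    rw [this] at I
    linarith
  rw [integral_of_le (by norm_num : (0:ℝ) ≤ 1), integral_of_le (by norm_num : (0:ℝ) ≤ 1)] at I2
  rw [← MeasureTheory.integral_Ioc_eq_integral_Ioo, ← MeasureTheory.integral_Ioc_eq_integral_Ioo]
  exact I2

end SVCX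

open SVCX


/-- Counterexample to identifiability for merely bounded measurable coefficients:
there are a bounded measurable `f` not vanishing a.e. on any open subinterval of `(0,1)`,
coefficients `a ≠ b` (on a set of positive measure) with values in `[1,2]`, and a single
differentiable `u` with zero boundary values and bounded derivative which is a weak
solution of `-(a u')' = f` and of `-(b u')' = f` on `(0,1)`. -/
theorem identifiability_fails_for_bounded_measurable_coefficients :
    ∃ (f a b : ℝ → ℝ) (u : ℝ → ℝ),
      Measurable f ∧ (∃ C : ℝ, ∀ x ∈ Ioo (0 : ℝ) 1, |f x| ≤ C) ∧
      (∀ U : Set ℝ, U ⊆ Ioo (0 : ℝ) 1 → IsOpen U → U.Nonempty →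
        ¬ (∀ᵐ x ∂(volume.restrict U), f x = 0)) ∧
      Measurable a ∧ Measurable b ∧
      (∀ x, 1 ≤ a x ∧ a x ≤ 2) ∧ (∀ x, 1 ≤ b x ∧ b x ≤ 2) ∧
      0 < volume {x ∈ Ioo (0 : ℝ) 1 | a x ≠ b x} ∧
      (∀ x ∈ Icc (0 : ℝ) 1, DifferentiableAt ℝ u x) ∧
      u 0 = 0 ∧ u 1 = 0 ∧
      (∃ K : ℝ, ∀ x ∈ Icc (0 : ℝ) 1, |deriv u x| ≤ K) ∧
      (∀ v : ℝ → ℝ, ContDiff ℝ (⊤ : ℕ∞) v → HasCompactSupport v → tsupport v ⊆ Ioo (0 : ℝ) 1 →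
        (∫ x in Ioo (0 : ℝ) 1, a x * deriv u x * deriv v x) =
          ∫ x in Ioo (0 : ℝ) 1, f x * v x) ∧
      (∀ v : ℝ → ℝ, ContDiff ℝ (⊤ : ℕ∞) v → HasCompactSupport v → tsupport v ⊆ Ioo (0 : ℝ) 1 →
        (∫ x in Ioo (0 : ℝ) 1, b x * deriv u x * deriv v x) =
          ∫ x in Ioo (0 : ℝ) 1, f x * v x) := by
  
  classical
  set JU : Set ℝ := ⋃ p : ℕ × ℕ, Jset p with hJU
  set Kset : Set ℝ := Icc (0:ℝ) 1 \ JU with hKset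
  have hKmeas : MeasurableSet Kset :=
    measurableSet_Icc.diff (MeasurableSet.iUnion measurable_Jset)
  have hderuu : ∀ x : ℝ, deriv uu x = gg x := fun x => (hasDerivAt_uu x).deriv
  refine ⟨ff, (fun _ => 1), (fun x => if x ∈ Kset then 2 else 1), uu,
    continuous_ff.measurable,
    ⟨∑' p : ℕ × ℕ, wF p, fun x _ => abs_ff_le x⟩,
    ?_, measurable_const, Measurable.ite hKmeas measurable_const measurable_const,
    fun x => ⟨le_refl 1, by norm_num⟩,
    fun x => by by_cases h : x ∈ Kset <;> simp [h],
    ?_,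
    fun x _ => (hasDerivAt_uu x).differentiableAt,
    uu_zero, uu_one,
    ⟨∑' p : ℕ × ℕ, wG p, fun x _ => by rw [hderuu x]; exact abs_gg_le x⟩,
    ?_, ?_⟩
  · -- f does not vanish a.e. on any open subinterval
    intro U hU hop hne hae
    obtain ⟨x₀, hx₀⟩ := hne
    obtain ⟨ε, hε, hball⟩ := Metric.isOpen_iff.1 hop x₀ hx₀
    obtain ⟨n, k, hk, y, hy, hyx⟩ := exists_J_near (hU hx₀) hε
    have hyU : y ∈ U := hball (by rw [Metric.mem_ball, Real.dist_eq]; exact hyx)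
    have hJopen : IsOpen (Jio n k) := by rw [Jio_eq]; exact isOpen_Ioo
    have hVopen : IsOpen (U ∩ Jio n k) := hop.inter hJopen
    have hVpos : 0 < volume (U ∩ Jio n k) := hVopen.measure_pos volume ⟨y, hyU, hy⟩
    have hL := Lp_pos n
    have hπ := Real.pi_pos
    have hsub : (U ∩ Jio n k) ⊆
        (Set.range (fun z : ℤ => alp n k + Lp n * ((z:ℝ)/4))) ∪ ({x | ¬ ff x = 0} ∩ U) := by
      intro x hx
      by_cases hfx : ff x = 0
      · left
        have hxJ := hx.2
        have hf := ff_on_J hk hxJ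
        rw [hf] at hfx
        set t := (x - alp n k)/Lp n with ht
        have hxJ' := hxJ
        rw [Jio_eq, mem_Ioo] at hxJ'
        have ht0 : 0 < t := div_pos (by linarith [hxJ'.1]) hL
        have ht1 : t < 1 := by rw [div_lt_one hL]; linarith [hxJ'.2]
        have hD : Dpsi t = 0 := by
          have h0 : Lp n * Dpsi t = 0 := by linarith [hfx]
          exact (mul_eq_zero.1 h0).resolve_left (ne_of_gt hL)
        rw [Dpsi, cl_of_mem (le_of_lt ht0) (le_of_lt ht1)] at hD
        have h6 : (6:ℝ)*π ≠ 0 := by positivity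
        have hsc : Real.sin (2*π*t)^2 * Real.cos (2*π*t) = 0 :=
          (mul_eq_zero.1 hD).resolve_left h6
        have hs4 : Real.sin (2*(2*π*t)) = 0 := by
          rw [Real.sin_two_mul]
          rcases mul_eq_zero.1 hsc with h | h
          · rw [pow_eq_zero_iff (by norm_num : 2 ≠ 0)] at h
            rw [h]; ring
          · rw [h]; ring
        obtain ⟨z, hz⟩ := Real.sin_eq_zero_iff.1 hs4
        have hπ' : π ≠ 0 := ne_of_gt hπ
        have hz4 : (z:ℝ) = 4*t := by
          apply mul_right_cancel₀ hπ'
          rw [hz]; ring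
        have hzt : (z:ℝ)/4 = t := by linarith
        refine ⟨z, ?_⟩
        have hxt : t * Lp n = x - alp n k := div_mul_cancel₀ _ (ne_of_gt hL)
        show alp n k + Lp n * ((z:ℝ)/4) = x
        rw [hzt]
        linarith
      · right; exact ⟨hfx, hx.1⟩
    have hBzero : volume (Set.range (fun z : ℤ => alp n k + Lp n * ((z:ℝ)/4))) = 0 :=
      (Set.countable_range _).measure_zero _
    have hNzero : volume ({x | ¬ ff x = 0} ∩ U) = 0 := by
      have h1 := ae_iff.1 hae
      rw [Measure.restrict_apply
        (show MeasurableSet {x | ¬ ff x = 0} from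
          (continuous_ff.measurable (measurableSet_singleton 0)).compl)] at h1
      exact h1
    have hle : volume (U ∩ Jio n k) ≤ 0 := by
      refine le_trans (measure_mono hsub) (le_trans (measure_union_le _ _) ?_)
      rw [hBzero, hNzero]
      norm_num
    exact absurd hVpos (by simpa using hle)
  · -- positive measure of {a ≠ b}
    have hset : {x ∈ Ioo (0:ℝ) 1 | (fun _ => (1:ℝ)) x ≠ (fun x => if x ∈ Kset then (2:ℝ) else 1) x}
        = Ioo (0:ℝ) 1 \ JU := by
      ext x
      simp only [mem_setOf_eq, mem_diff, mem_Ioo]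
      constructor
      · rintro ⟨hx1, hx2⟩
        refine ⟨hx1, ?_⟩
        by_cases h : x ∈ Kset
        · exact h.2
        · exfalso
          rw [if_neg h] at hx2
          exact hx2 rfl
      · rintro ⟨hx1, hx2⟩
        refine ⟨hx1, ?_⟩
        have hxK : x ∈ Kset := ⟨⟨le_of_lt hx1.1, le_of_lt hx1.2⟩, hx2⟩
        simp [hxK]
    rw [hset]
    exact vol_diff_pos
  · -- weak form for a ≡ 1
    intro v hv hcs hsupp
    simp only [hderuu, one_mul]
    exact weak_form v hv hsupp
  · -- weak form for b
    intro v hv hcs hsupp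
    simp only [hderuu]
    have hb : (fun x => (if x ∈ Kset then (2:ℝ) else 1) * gg x * deriv v x)
        = fun x => gg x * deriv v x := by
      funext x
      by_cases h : x ∈ Kset
      · rw [if_pos h, gg_eq_zero h.2]
        ring
      · rw [if_neg h, one_mul]
    rw [hb]
    exact weak_form v hv hsupp
end
end

section
/- Let f ∈ L¹(0,1) with f(x) ≠ 0 for almost every x ∈ (0,1). Let a ∈ 𝒜 and let (a_n) be a sequence in 𝒜, with associated solutions u_a and u_{a_n}. If ∫₀¹ |u_{a_n}'(x) − u_a'(x)|² dx → 0 as n → ∞, then for every p ∈ [1, ∞), ∫₀¹ |a_n(x) − a(x)|^p dx → 0 as n → ∞. -/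
open MeasureTheory Set Filter

noncomputable section

/-- The admissible set `𝒜`: measurable coefficients with `lam ≤ a ≤ Lam` a.e. on `(0,1)`. -/
def MemAdm (lam Lam : ℝ) (a : ℝ → ℝ) : Prop :=
  Measurable a ∧ ∀ᵐ x ∂(volume.restrict (Ioo (0 : ℝ) 1)), lam ≤ a x ∧ a x ≤ Lam

/-- The primitive `F(x) = ∫₀ˣ f(t) dt`. -/
def Fprim (f : ℝ → ℝ) (x : ℝ) : ℝ := ∫ t in (0 : ℝ)..x, f t

/-- The constant `C_a = (∫₀¹ 1/a)⁻¹ ∫₀¹ F/a`. -/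
def Cconst (f a : ℝ → ℝ) : ℝ :=
  (∫ x in Ioo (0 : ℝ) 1, 1 / a x)⁻¹ * ∫ x in Ioo (0 : ℝ) 1, Fprim f x / a x

/-- `u` is the solution associated with the coefficient `a` and right-hand side `f`:
`u` is continuous on `[0,1]` with `u(0) = u(1) = 0`, differentiable a.e. on `(0,1)`, and
`a u' = C_a - F` a.e. on `(0,1)`. -/
def IsSol (f a u : ℝ → ℝ) : Prop :=
  ContinuousOn u (Icc 0 1) ∧ u 0 = 0 ∧ u 1 = 0 ∧
  ∀ᵐ x ∂(volume.restrict (Ioo (0 : ℝ) 1)),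
    DifferentiableAt ℝ u x ∧ a x * deriv u x = Cconst f a - Fprim f x

/-!
Write `T = C_a - F`, so that `a u_a' = T` and `a_n u_n' = T + (C_{a_n} - C_a)` a.e.
Since `F' = f ≠ 0` a.e., the level sets of `F` are null and `T ≠ 0` a.e.; as `∫ T / a = 0` by the
choice of `C_a`, the continuous function `T` takes both signs, hence takes values in `(-ε, 0)` and
in `(0, ε)` on sets of positive measure. Where `T` and `T + (C_{a_n} - C_a)` have opposite signs,
`|u_n' - u_a'| ≥ |C_{a_n} - C_a| / Λ`, so the `L²` convergence of the derivatives forces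
`C_{a_n} → C_a`. Then `(a_n - a) u_a' = (C_{a_n} - C_a) - a_n (u_n' - u_a')` tends to `0` in `L¹`;
since `u_a' ≠ 0` a.e. and `|a_n - a| ≤ Λ - λ`, this gives `a_n → a` in `L¹`, hence in every `L^p`.
-/

open Topology
open scoped ENNReal

section Measure

variable {α : Type*} [MeasurableSpace α] {μ : Measure α}

theorem integral_pos_of_ae_pos [NeZero μ] {g : α → ℝ} (hg : Integrable g μ)
    (hpos : ∀ᵐ x ∂μ, 0 < g x) : 0 < ∫ x, g x ∂μ := by
  rw [integral_pos_iff_support_of_nonneg_ae (hpos.mono fun _ => le_of_lt) hg, pos_iff_ne_zero]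
  intro h0
  have : ∀ᵐ x ∂μ, False := (hpos.and (measure_eq_zero_iff_ae_notMem.1 h0)).mono
    fun x hx => hx.2 hx.1.ne'
  exact NeZero.ne μ (by simpa using this)

theorem frequently_pos_of_integral_eq_zero [NeZero μ] {g : α → ℝ} (hg : Integrable g μ)
    (h0 : ∫ x, g x ∂μ = 0) (hne : ∀ᵐ x ∂μ, g x ≠ 0) : ∃ᵐ x ∂μ, 0 < g x := by
  intro hnonpos
  have hzero : -g =ᵐ[μ] 0 := (integral_eq_zero_iff_of_nonneg_ae
    (hnonpos.mono fun x hx => neg_nonneg.2 (not_lt.1 hx)) hg.neg).1 (by simp [integral_neg, h0])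
  have : ∀ᵐ x ∂μ, False := (hzero.and hne).mono fun x hx => hx.2 (neg_eq_zero.1 hx.1)
  exact NeZero.ne μ (by simpa using this)

theorem tendsto_integral_rpow_of_tendsto_integral {h : ℕ → α → ℝ} {K p : ℝ} (hp : 1 ≤ p)
    (hint : ∀ n, Integrable (h n) μ) (hbound : ∀ n, ∀ᵐ x ∂μ, 0 ≤ h n x ∧ h n x ≤ K)
    (hlim : Tendsto (fun n => ∫ x, h n x ∂μ) atTop (𝓝 0)) :
    Tendsto (fun n => ∫ x, h n x ^ p ∂μ) atTop (𝓝 0) := by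
  have hpt : ∀ n, ∀ᵐ x ∂μ, h n x ^ p ≤ K ^ (p - 1) * h n x := by
    intro n
    filter_upwards [hbound n] with x ⟨h0, hK⟩
    calc h n x ^ p = h n x ^ (p - 1) * h n x := by
          rw [← Real.rpow_add_one' h0 (by linarith), sub_add_cancel]
      _ ≤ K ^ (p - 1) * h n x := by gcongr
  have hintp : ∀ n, Integrable (fun x => h n x ^ p) μ := fun n =>
    ((hint n).const_mul _).mono' ((hint n).aemeasurable.pow_const p).aestronglyMeasurable
      (by filter_upwards [hpt n, hbound n] with x hx ⟨h0, _⟩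
          rwa [Real.norm_of_nonneg (Real.rpow_nonneg h0 p)])
  refine squeeze_zero' (.of_forall fun n => integral_nonneg_of_ae ?_)
    (.of_forall fun n => integral_mono_ae (hintp n) ((hint n).const_mul _) (hpt n))
    (by simpa [integral_const_mul] using hlim.const_mul (K ^ (p - 1)))
  filter_upwards [hbound n] with x ⟨h0, _⟩
  exact Real.rpow_nonneg h0 p

variable [IsFiniteMeasure μ]

theorem tendsto_integral_abs_of_tendsto_integral_sq {g : ℕ → α → ℝ} (hg : ∀ n, MemLp (g n) 2 μ)
    (h : Tendsto (fun n => ∫ x, |g n x| ^ 2 ∂μ) atTop (𝓝 0)) :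
    Tendsto (fun n => ∫ x, |g n x| ∂μ) atTop (𝓝 0) := by
  refine tendsto_order.2 ⟨fun b hb => .of_forall fun n => hb.trans_le (by positivity),
    fun ε hε => ?_⟩
  set δ := ε / (2 * (μ.real univ + 1))
  have hδ : 0 < δ := by positivity
  filter_upwards [h.eventually_lt_const (show 0 < δ * (ε / 2) by positivity)] with n hn
  have hsq : Integrable (fun x => |g n x| ^ 2) μ := by
    simpa using (hg n).integrable_norm_pow two_ne_zero
  have hpt : ∀ x, |g n x| ≤ δ + |g n x| ^ 2 / δ := by
    intro x
    have : |g n x| ≤ (δ ^ 2 + |g n x| ^ 2) / δ := by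
      rw [le_div_iff₀ hδ]
      nlinarith [sq_nonneg (|g n x| - δ), abs_nonneg (g n x)]
    rwa [add_div, sq δ, mul_div_cancel_right₀ _ hδ.ne'] at this
  have hμ : δ * μ.real univ < ε / 2 := by
    rw [div_mul_eq_mul_div, div_lt_div_iff₀ (by positivity) two_pos]
    nlinarith [measureReal_nonneg (μ := μ) (s := univ)]
  calc ∫ x, |g n x| ∂μ ≤ ∫ x, (δ + |g n x| ^ 2 / δ) ∂μ :=
        integral_mono ((hg n).integrable one_le_two).abs
          ((integrable_const δ).add (hsq.div_const δ)) hpt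
    _ = δ * μ.real univ + (∫ x, |g n x| ^ 2 ∂μ) / δ := by
        rw [integral_add (integrable_const δ) (hsq.div_const δ), integral_const, integral_div,
          smul_eq_mul, mul_comm]
    _ < ε / 2 + ε / 2 := add_lt_add hμ (by rw [div_lt_iff₀ hδ]; linarith)
    _ = ε := add_halves ε

theorem tendsto_measureReal_setOf_lt_nhdsGT_zero {w : α → ℝ} (hw : AEMeasurable w μ)
    (hpos : ∀ᵐ x ∂μ, 0 < w x) :
    Tendsto (fun r => μ.real {x | w x < r}) (𝓝[>] 0) (𝓝 0) := by
  have hlim := tendsto_measure_biInter_gt (μ := μ) (s := fun r => {x | w x < r}) (a := (0 : ℝ))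
    (fun r _ => nullMeasurableSet_lt hw aemeasurable_const)
    (fun i j _ hij x (hx : w x < i) => hx.trans_le hij) ⟨1, one_pos, measure_ne_top μ _⟩
  have hnull : μ (⋂ r > (0 : ℝ), {x | w x < r}) = 0 := by
    refine measure_mono_null (fun x hx => ?_) (ae_iff.1 hpos)
    simp only [mem_iInter, mem_ofPred_eq] at hx ⊢
    exact fun h => (hx (w x) h).false
  rw [hnull] at hlim
  exact (ENNReal.tendsto_toReal ENNReal.zero_ne_top).comp hlim

theorem tendsto_integral_of_tendsto_integral_mul {h : ℕ → α → ℝ} {w : α → ℝ} {K : ℝ}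
    (hint : ∀ n, Integrable (h n) μ) (hintw : ∀ n, Integrable (fun x => h n x * w x) μ)
    (hbound : ∀ n, ∀ᵐ x ∂μ, 0 ≤ h n x ∧ h n x ≤ K) (hw : AEMeasurable w μ)
    (hpos : ∀ᵐ x ∂μ, 0 < w x)
    (hlim : Tendsto (fun n => ∫ x, h n x * w x ∂μ) atTop (𝓝 0)) :
    Tendsto (fun n => ∫ x, h n x ∂μ) atTop (𝓝 0) := by
  refine tendsto_order.2 ⟨fun b hb => .of_forall fun n => hb.trans_le
    (integral_nonneg_of_ae ((hbound n).mono fun x hx => hx.1)), fun ε hε => ?_⟩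
  obtain ⟨δ, hδε, hδ⟩ : ∃ δ, K * μ.real {x | w x < δ} < ε / 2 ∧ 0 < δ :=
    (((tendsto_measureReal_setOf_lt_nhdsGT_zero hw hpos).const_mul K).eventually_lt_const
      (by simpa using half_pos hε) |>.and self_mem_nhdsWithin).exists
  filter_upwards [hlim.eventually_lt_const (show 0 < δ * (ε / 2) by positivity)] with n hn
  set S := {x | w x < δ}
  have hS : NullMeasurableSet S μ := nullMeasurableSet_lt hw aemeasurable_const
  -- below the threshold `δ` use `h ≤ K`, above it use `h ≤ h w / δ`
  have hpt : ∀ᵐ x ∂μ, h n x ≤ S.indicator (fun _ => K) x + h n x * w x / δ := by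
    filter_upwards [hbound n, hpos] with x ⟨h0, hK⟩ hw0
    by_cases hx : x ∈ S
    · have : 0 ≤ h n x * w x / δ := by positivity
      rw [indicator_of_mem hx]
      linarith
    · rw [indicator_of_notMem hx, zero_add, le_div_iff₀ hδ]
      exact mul_le_mul_of_nonneg_left (not_lt.1 hx) h0
  have hind : Integrable (S.indicator fun _ => K) μ := (integrable_const K).indicator₀ hS
  calc ∫ x, h n x ∂μ
      ≤ ∫ x, (S.indicator (fun _ => K) x + h n x * w x / δ) ∂μ :=
        integral_mono_ae (hint n) (hind.add ((hintw n).div_const δ)) hpt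
    _ = K * μ.real S + (∫ x, h n x * w x ∂μ) / δ := by
        rw [integral_add hind ((hintw n).div_const δ), integral_div, integral_indicator₀ hS,
          setIntegral_const, smul_eq_mul, mul_comm]
    _ < ε / 2 + ε / 2 := add_lt_add hδε (by rw [div_lt_iff₀ hδ]; linarith)
    _ = ε := add_halves ε

end Measure

theorem ae_ne_of_hasDerivAt {ν : Measure ℝ} [NullSingletonClass ν] {F f : ℝ → ℝ}
    (hF : ∀ᵐ x ∂ν, HasDerivAt F (f x) x ∧ f x ≠ 0) (c : ℝ) : ∀ᵐ x ∂ν, F x ≠ c := by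
  set E := {x | F x = c}
  -- off the countably many points of `E` isolated from the right in `E`, the slopes of `F`
  -- along `E` vanish, which is incompatible with `F' ≠ 0`
  have hA : ∀ᵐ x ∂ν, x ∉ {x ∈ E | 𝓝[E ∩ Ioi x] x = ⊥} :=
    measure_eq_zero_iff_ae_notMem.1 (countable_setOfPred_isolated_right_within.measure_zero ν)
  filter_upwards [hF, hA] with x ⟨hd, hfx⟩ hxA hFx
  have : NeBot (𝓝[E ∩ Ioi x] x) := ⟨fun h => hxA ⟨hFx, h⟩⟩
  have hslope : Tendsto (slope F x) (𝓝[E ∩ Ioi x] x) (𝓝 (f x)) :=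
    hd.tendsto_slope.mono_left (nhdsWithin_mono _ fun y hy => ne_of_gt hy.2)
  have hzero : slope F x =ᶠ[𝓝[E ∩ Ioi x] x] fun _ => 0 := by
    filter_upwards [self_mem_nhdsWithin] with y hy
    simp [slope_def_field, hy.1.out, hFx]
  exact hfx (tendsto_nhds_unique hslope (tendsto_const_nhds.congr' hzero.symm))

theorem measure_inter_preimage_Ioo_pos {s : Set ℝ} (hs : IsOpen s) (hsc : IsPreconnected s)
    {T : ℝ → ℝ} (hT : ContinuousOn T s) {x₁ x₂ A B : ℝ} (hx₁ : x₁ ∈ s) (hx₂ : x₂ ∈ s)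
    (hAB : A < B) (h₁ : T x₁ < B) (h₂ : A < T x₂) :
    0 < volume.restrict s (T ⁻¹' Ioo A B) := by
  rw [Measure.restrict_apply' hs.measurableSet, inter_comm]
  refine (hT.isOpen_inter_preimage hs isOpen_Ioo).measure_pos volume ?_
  by_cases hA : A < T x₁
  · exact ⟨x₁, hx₁, hA, h₁⟩
  by_cases hB : T x₂ < B
  · exact ⟨x₂, hx₂, h₂, hB⟩
  obtain ⟨y, hy, hTy⟩ : (A + B) / 2 ∈ T '' s :=
    (hsc.image T hT).Icc_subset (mem_image_of_mem T hx₁) (mem_image_of_mem T hx₂)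
      ⟨by linarith, by linarith⟩
  exact ⟨y, hy, by rw [mem_preimage, hTy]; constructor <;> linarith⟩

theorem abs_sub_div_le_abs_div_sub_div {a b s t Λ : ℝ} (ha : 0 < a) (hb : 0 < b) (haΛ : a ≤ Λ)
    (hbΛ : b ≤ Λ) (hst : s * t ≤ 0) : |t - s| / Λ ≤ |t / b - s / a| := by
  have hsame : 0 ≤ t / b * (-s / a) := by
    rw [div_mul_div_comm]
    exact div_nonneg (by linarith) (by positivity)
  calc |t - s| / Λ ≤ |t| / Λ + |s| / Λ := by
        rw [← add_div]
        exact div_le_div_of_nonneg_right (abs_sub _ _) (ha.le.trans haΛ)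
    _ ≤ |t| / b + |s| / a := by gcongr
    _ = |t / b - s / a| := by
        rw [sub_eq_add_neg, ← neg_div, (abs_add_eq_add_abs_iff _ _).2 (mul_nonneg_iff.1 hsame),
          abs_div, abs_div, abs_neg, abs_of_pos ha, abs_of_pos hb]

local notation "μ₀" => (volume.restrict (Ioo (0 : ℝ) 1) : Measure ℝ)

instance : NeZero μ₀ := ⟨by simp⟩

theorem continuousOn_Fprim {f : ℝ → ℝ} (hf : IntegrableOn f (Ioo (0 : ℝ) 1)) :
    ContinuousOn (Fprim f) (Icc 0 1) := by
  have hf' : IntegrableOn f (uIcc 0 1) := by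
    rwa [uIcc_of_le zero_le_one, integrableOn_Icc_iff_integrableOn_Ioo]
  have := intervalIntegral.continuousOn_primitive_interval hf'
  rwa [uIcc_of_le zero_le_one] at this

theorem continuousOn_sub_Fprim {f : ℝ → ℝ} (hf : IntegrableOn f (Ioo (0 : ℝ) 1)) (c : ℝ) :
    ContinuousOn (fun x => c - Fprim f x) (Icc 0 1) :=
  continuousOn_const.sub (continuousOn_Fprim hf)

theorem ae_hasDerivAt_Fprim {f : ℝ → ℝ} (hf : IntegrableOn f (Ioo (0 : ℝ) 1)) :
    ∀ᵐ x ∂μ₀, HasDerivAt (Fprim f) (f x) x := by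
  have hf' : IntervalIntegrable f volume 0 1 := by
    rwa [intervalIntegrable_iff_integrableOn_Ioo_of_le zero_le_one]
  rw [ae_restrict_iff' measurableSet_Ioo]
  filter_upwards [hf'.ae_hasDerivAt_integral] with x hx hxI
  exact hx (Ioo_subset_Icc_self (by simpa using hxI)) 0 (by simp)

theorem ae_sub_Fprim_ne_zero {f : ℝ → ℝ} (hf : IntegrableOn f (Ioo (0 : ℝ) 1))
    (hfne : ∀ᵐ x ∂μ₀, f x ≠ 0) (c : ℝ) : ∀ᵐ x ∂μ₀, c - Fprim f x ≠ 0 :=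
  (ae_ne_of_hasDerivAt ((ae_hasDerivAt_Fprim hf).and hfne) c).mono
    fun _ hx => sub_ne_zero.2 (Ne.symm hx)

namespace MemAdm

variable {lam Lam : ℝ} {a : ℝ → ℝ}

theorem ae_pos (hlam : 0 < lam) (ha : MemAdm lam Lam a) : ∀ᵐ x ∂μ₀, 0 < a x :=
  ha.2.mono fun _ hx => hlam.trans_le hx.1

theorem exists_ae_abs_div_le (hlam : 0 < lam) (ha : MemAdm lam Lam a) {g : ℝ → ℝ}
    (hg : ContinuousOn g (Icc 0 1)) : ∃ B, ∀ᵐ x ∂μ₀, |g x / a x| ≤ B := by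
  obtain ⟨M, hM⟩ := isCompact_Icc.exists_bound_of_continuousOn hg
  refine ⟨M / lam, ?_⟩
  filter_upwards [ha.2, ae_restrict_mem measurableSet_Ioo] with x hx hxI
  have hgx : |g x| ≤ M := by simpa using hM x (Ioo_subset_Icc_self hxI)
  rw [abs_div, abs_of_pos (hlam.trans_le hx.1)]
  exact div_le_div₀ ((abs_nonneg _).trans hgx) hgx hlam hx.1

theorem integrableOn_div (hlam : 0 < lam) (ha : MemAdm lam Lam a) {g : ℝ → ℝ}
    (hg : ContinuousOn g (Icc 0 1)) : IntegrableOn (fun x => g x / a x) (Ioo 0 1) := by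
  obtain ⟨B, hB⟩ := ha.exists_ae_abs_div_le hlam hg
  have hgm := (hg.mono Ioo_subset_Icc_self).aestronglyMeasurable (μ := volume) measurableSet_Ioo
  exact Integrable.of_bound (hgm.aemeasurable.div ha.1.aemeasurable).aestronglyMeasurable B hB

theorem integral_one_div_pos (hlam : 0 < lam) (ha : MemAdm lam Lam a) :
    0 < ∫ x in Ioo (0 : ℝ) 1, 1 / a x := by
  refine integral_pos_of_ae_pos (ha.integrableOn_div hlam continuousOn_const) ?_
  filter_upwards [ha.ae_pos hlam] with x hx using one_div_pos.2 hx

end MemAdm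

theorem integral_Cconst_sub_Fprim_div {lam Lam : ℝ} (hlam : 0 < lam) {f a : ℝ → ℝ}
    (hf : IntegrableOn f (Ioo (0 : ℝ) 1)) (ha : MemAdm lam Lam a) :
    ∫ x in Ioo (0 : ℝ) 1, (Cconst f a - Fprim f x) / a x = 0 := by
  have h₁ := ha.integrableOn_div hlam (g := fun _ => 1) continuousOn_const
  have h₂ := ha.integrableOn_div hlam (continuousOn_Fprim hf)
  have hpos := ha.integral_one_div_pos hlam
  calc ∫ x in Ioo (0 : ℝ) 1, (Cconst f a - Fprim f x) / a x
      = ∫ x in Ioo (0 : ℝ) 1, (Cconst f a * (1 / a x) - Fprim f x / a x) := by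
        congr 1; ext x; ring
    _ = Cconst f a * (∫ x in Ioo (0 : ℝ) 1, 1 / a x) - ∫ x in Ioo (0 : ℝ) 1, Fprim f x / a x := by
        rw [integral_sub (h₁.const_mul _) h₂, integral_const_mul]
    _ = 0 := by rw [Cconst, mul_comm, ← mul_assoc, mul_inv_cancel₀ hpos.ne', one_mul, sub_self]

theorem exists_Cconst_sub_Fprim_neg_and_pos {lam Lam : ℝ} (hlam : 0 < lam) {f a : ℝ → ℝ}
    (hf : IntegrableOn f (Ioo (0 : ℝ) 1)) (hfne : ∀ᵐ x ∂μ₀, f x ≠ 0) (ha : MemAdm lam Lam a) :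
    (∃ x ∈ Ioo (0 : ℝ) 1, Cconst f a - Fprim f x < 0) ∧
      ∃ x ∈ Ioo (0 : ℝ) 1, 0 < Cconst f a - Fprim f x := by
  have hint := ha.integrableOn_div hlam (continuousOn_sub_Fprim hf (Cconst f a))
  have h0 := integral_Cconst_sub_Fprim_div hlam hf ha
  have hne : ∀ᵐ x ∂μ₀, (Cconst f a - Fprim f x) / a x ≠ 0 := by
    filter_upwards [ae_sub_Fprim_ne_zero hf hfne (Cconst f a), ha.ae_pos hlam] with x hT hax
    exact div_ne_zero hT hax.ne'
  have hgood := (ha.ae_pos hlam).and (ae_restrict_mem (μ := volume) measurableSet_Ioo)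
  constructor
  · have h0' : ∫ x in Ioo (0 : ℝ) 1, -((Cconst f a - Fprim f x) / a x) = 0 := by
      rw [integral_neg, h0, neg_zero]
    obtain ⟨x, hx, hax, hxI⟩ := ((frequently_pos_of_integral_eq_zero hint.neg h0'
      (hne.mono fun _ => neg_ne_zero.2)).and_eventually hgood).exists
    exact ⟨x, hxI, neg_pos.1 ((div_pos_iff_of_pos_right hax).1 (by rwa [neg_div]))⟩
  · obtain ⟨x, hx, hax, hxI⟩ := ((frequently_pos_of_integral_eq_zero hint h0 hne).and_eventually
      hgood).exists
    exact ⟨x, hxI, (div_pos_iff_of_pos_right hax).1 hx⟩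

namespace IsSol

variable {lam Lam : ℝ} {f a u : ℝ → ℝ}

theorem ae_deriv_eq (hlam : 0 < lam) (ha : MemAdm lam Lam a) (hu : IsSol f a u) :
    ∀ᵐ x ∂μ₀, deriv u x = (Cconst f a - Fprim f x) / a x := by
  filter_upwards [hu.2.2.2, ha.ae_pos hlam] with x hx hax
  rw [eq_div_iff hax.ne', mul_comm, hx.2]

theorem memLp_deriv (hlam : 0 < lam) (hf : IntegrableOn f (Ioo (0 : ℝ) 1))
    (ha : MemAdm lam Lam a) (hu : IsSol f a u) (p : ℝ≥0∞) : MemLp (deriv u) p μ₀ := by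
  obtain ⟨B, hB⟩ := ha.exists_ae_abs_div_le hlam (continuousOn_sub_Fprim hf _)
  refine MemLp.of_bound (measurable_deriv u).aestronglyMeasurable B ?_
  filter_upwards [hu.ae_deriv_eq hlam ha, hB] with x hx hxB
  rwa [Real.norm_eq_abs, hx]

end IsSol

section Coefficients

variable {lam Lam : ℝ} {f a ua : ℝ → ℝ} {aseq useq : ℕ → ℝ → ℝ}

theorem mul_measureReal_le_integral_sq_deriv_sub {b ub : ℝ → ℝ} (hlam : 0 < lam)
    (hf : IntegrableOn f (Ioo (0 : ℝ) 1)) (ha : MemAdm lam Lam a) (hb : MemAdm lam Lam b)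
    (hua : IsSol f a ua) (hub : IsSol f b ub) {V : Set ℝ}
    (hV : ∀ x ∈ V, (Cconst f a - Fprim f x) * (Cconst f b - Fprim f x) ≤ 0) :
    (|Cconst f b - Cconst f a| / Lam) ^ 2 * (μ₀).real V ≤
      ∫ x in Ioo (0 : ℝ) 1, |deriv ub x - deriv ua x| ^ 2 := by
  set c := (|Cconst f b - Cconst f a| / Lam) ^ 2
  have hsub : V ≤ᵐ[μ₀] {x | c ≤ |deriv ub x - deriv ua x| ^ 2} := by
    filter_upwards [hua.ae_deriv_eq hlam ha, hub.ae_deriv_eq hlam hb, ha.2, hb.2]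
      with x hda hdb hax hbx hxV
    have hCC : Cconst f b - Cconst f a = (Cconst f b - Fprim f x) - (Cconst f a - Fprim f x) := by
      ring
    change (|Cconst f b - Cconst f a| / Lam) ^ 2 ≤ _
    rw [hda, hdb, hCC]
    have hax₀ : 0 < a x := hlam.trans_le hax.1
    exact pow_le_pow_left₀ (div_nonneg (abs_nonneg _) (hax₀.le.trans hax.2))
      (abs_sub_div_le_abs_div_sub_div hax₀ (hlam.trans_le hbx.1) hax.2 hbx.2 (hV x hxV)) 2
  have hint : Integrable (fun x => |deriv ub x - deriv ua x| ^ 2) μ₀ := by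
    simpa using ((hub.memLp_deriv hlam hf hb 2).sub
      (hua.memLp_deriv hlam hf ha 2)).integrable_norm_pow two_ne_zero
  calc c * (μ₀).real V ≤ c * (μ₀).real {x | c ≤ |deriv ub x - deriv ua x| ^ 2} :=
        mul_le_mul_of_nonneg_left
          (ENNReal.toReal_mono (measure_ne_top _ _) (measure_mono_ae hsub)) (by positivity)
    _ ≤ _ := mul_meas_ge_le_integral_of_nonneg (.of_forall fun _ => by positivity) hint _

theorem tendsto_Cconst_sub_Cconst (hlam : 0 < lam) (hlamLam : lam ≤ Lam)
    (hf : IntegrableOn f (Ioo (0 : ℝ) 1)) (hfne : ∀ᵐ x ∂μ₀, f x ≠ 0) (ha : MemAdm lam Lam a)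
    (haseq : ∀ n, MemAdm lam Lam (aseq n)) (hua : IsSol f a ua)
    (huseq : ∀ n, IsSol f (aseq n) (useq n))
    (hconv : Tendsto (fun n => ∫ x in Ioo (0 : ℝ) 1, |deriv (useq n) x - deriv ua x| ^ 2)
      atTop (𝓝 0)) :
    Tendsto (fun n => Cconst f (aseq n) - Cconst f a) atTop (𝓝 0) := by
  set T := fun x => Cconst f a - Fprim f x
  have hLam : 0 < Lam := hlam.trans_le hlamLam
  obtain ⟨⟨x₁, hx₁, hT₁⟩, x₂, hx₂, hT₂⟩ := exists_Cconst_sub_Fprim_neg_and_pos hlam hf hfne ha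
  have hpos : ∀ {A B}, A < B → T x₁ < B → A < T x₂ → 0 < (μ₀).real (T ⁻¹' Ioo A B) :=
    fun hAB h₁ h₂ => ENNReal.toReal_pos (measure_inter_preimage_Ioo_pos isOpen_Ioo
      isPreconnected_Ioo ((continuousOn_sub_Fprim hf _).mono Ioo_subset_Icc_self) hx₁ hx₂ hAB h₁
      h₂).ne' (measure_ne_top _ _)
  refine Metric.tendsto_nhds.2 fun ε hε => ?_
  set m := min ((μ₀).real (T ⁻¹' Ioo (-ε) 0)) ((μ₀).real (T ⁻¹' Ioo 0 ε))
  have hm : 0 < m := lt_min (hpos (by linarith) hT₁ (by linarith)) (hpos hε (by linarith) hT₂)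
  filter_upwards [hconv.eventually_lt_const (show 0 < (ε / Lam) ^ 2 * m by positivity)] with n hn
  rw [Real.dist_0_eq_abs]
  by_contra! hεd
  set d := Cconst f (aseq n) - Cconst f a
  have hTn : ∀ x, Cconst f (aseq n) - Fprim f x = T x + d := fun x => by ring
  obtain ⟨V, hV, hmV⟩ : ∃ V, (∀ x ∈ V, T x * (Cconst f (aseq n) - Fprim f x) ≤ 0) ∧
      m ≤ (μ₀).real V := by
    simp only [hTn]
    rcases le_or_gt 0 d with hd | hd
    · rw [abs_of_nonneg hd] at hεd
      exact ⟨_, fun x hx => mul_nonpos_of_nonpos_of_nonneg hx.2.le (by linarith [hx.1]),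
        min_le_left _ _⟩
    · rw [abs_of_neg hd] at hεd
      exact ⟨_, fun x hx => mul_nonpos_of_nonneg_of_nonpos hx.1.le (by linarith [hx.2]),
        min_le_right _ _⟩
  have : (ε / Lam) ^ 2 * m ≤ (|d| / Lam) ^ 2 * (μ₀).real V := by gcongr
  linarith [mul_measureReal_le_integral_sq_deriv_sub hlam hf ha (haseq n) hua (huseq n) hV]

theorem tendsto_integral_abs_sub_mul_abs_deriv (hlam : 0 < lam)
    (haseq : ∀ n, MemAdm lam Lam (aseq n)) (hua : IsSol f a ua)
    (huseq : ∀ n, IsSol f (aseq n) (useq n))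
    (hC : Tendsto (fun n => Cconst f (aseq n) - Cconst f a) atTop (𝓝 0))
    (hgi : ∀ n, Integrable (fun x => deriv (useq n) x - deriv ua x) μ₀)
    (hg : Tendsto (fun n => ∫ x in Ioo (0 : ℝ) 1, |deriv (useq n) x - deriv ua x|) atTop (𝓝 0)) :
    Tendsto (fun n => ∫ x in Ioo (0 : ℝ) 1, |aseq n x - a x| * |deriv ua x|) atTop (𝓝 0) := by
  have hpt : ∀ n, ∀ᵐ x ∂μ₀, |aseq n x - a x| * |deriv ua x| ≤
      |Cconst f (aseq n) - Cconst f a| + Lam * |deriv (useq n) x - deriv ua x| := by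
    intro n
    filter_upwards [hua.2.2.2, (huseq n).2.2.2, (haseq n).2] with x hu hun han
    rw [← abs_mul, show (aseq n x - a x) * deriv ua x = (Cconst f (aseq n) - Cconst f a) -
      aseq n x * (deriv (useq n) x - deriv ua x) by linear_combination hun.2 - hu.2]
    refine (abs_sub _ _).trans ?_
    gcongr
    rw [abs_mul, abs_of_pos (hlam.trans_le han.1)]
    exact mul_le_mul_of_nonneg_right han.2 (abs_nonneg _)
  refine squeeze_zero (fun n => integral_nonneg fun x => by positivity) (fun n => ?_)
    (by simpa using (hC.abs.mul_const ((μ₀).real univ)).add (hg.const_mul Lam))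
  refine (integral_mono_of_nonneg (.of_forall fun x => by positivity)
    ((integrable_const _).add ((hgi n).abs.const_mul Lam)) (hpt n)).trans_eq ?_
  simp only [Pi.add_apply]
  rw [integral_add (integrable_const _) ((hgi n).abs.const_mul Lam), integral_const, smul_eq_mul,
    integral_const_mul]
  simp

end Coefficients

/-- One-dimensional continuity: if `f ≠ 0` a.e. and the solutions converge in `H¹₀`,
then the coefficients converge in every `L^p`, `1 ≤ p < ∞`. -/
theorem one_dimensional_Lp_continuity (lam Lam : ℝ) (hlam : 0 < lam) (hlamLam : lam ≤ Lam)
    (f : ℝ → ℝ) (hf : IntegrableOn f (Ioo (0 : ℝ) 1))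
    (hfne : ∀ᵐ x ∂(volume.restrict (Ioo (0 : ℝ) 1)), f x ≠ 0)
    (a : ℝ → ℝ) (ha : MemAdm lam Lam a)
    (aseq : ℕ → ℝ → ℝ) (haseq : ∀ n, MemAdm lam Lam (aseq n))
    (ua : ℝ → ℝ) (hua : IsSol f a ua)
    (useq : ℕ → ℝ → ℝ) (huseq : ∀ n, IsSol f (aseq n) (useq n))
    (hconv : Tendsto (fun n => ∫ x in Ioo (0 : ℝ) 1, |deriv (useq n) x - deriv ua x| ^ 2)
      atTop (nhds 0)) :
    ∀ p : ℝ, 1 ≤ p →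
      Tendsto (fun n => ∫ x in Ioo (0 : ℝ) 1, |aseq n x - a x| ^ p) atTop (nhds 0) := by
  intro p hp
  have hC := tendsto_Cconst_sub_Cconst hlam hlamLam hf hfne ha haseq hua huseq hconv
  have hL2 : ∀ n, MemLp (fun x => deriv (useq n) x - deriv ua x) 2 μ₀ := fun n =>
    ((huseq n).memLp_deriv hlam hf (haseq n) 2).sub (hua.memLp_deriv hlam hf ha 2)
  have hg := tendsto_integral_abs_of_tendsto_integral_sq hL2 hconv
  have hbound : ∀ n, ∀ᵐ x ∂μ₀, 0 ≤ |aseq n x - a x| ∧ |aseq n x - a x| ≤ Lam - lam := by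
    intro n
    filter_upwards [ha.2, (haseq n).2] with x hx hxn
    exact ⟨abs_nonneg _, abs_sub_le_iff.2 ⟨by linarith, by linarith⟩⟩
  have hint : ∀ n, Integrable (fun x => |aseq n x - a x|) μ₀ := fun n =>
    .of_bound ((haseq n).1.sub ha.1).abs.aestronglyMeasurable _
      ((hbound n).mono fun x hx => by rw [Real.norm_eq_abs, abs_abs]; exact hx.2)
  have hderiv_pos : ∀ᵐ x ∂μ₀, 0 < |deriv ua x| := by
    filter_upwards [hua.2.2.2, ae_sub_Fprim_ne_zero hf hfne (Cconst f a)] with x hx hT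
    exact abs_pos.2 (right_ne_zero_of_mul (hx.2 ▸ hT))
  refine tendsto_integral_rpow_of_tendsto_integral hp hint hbound
    (tendsto_integral_of_tendsto_integral_mul hint
      (fun n => (hint n).mul_of_top_left (hua.memLp_deriv hlam hf ha ⊤).abs) hbound
      (measurable_deriv ua).abs.aemeasurable hderiv_pos
      (tendsto_integral_abs_sub_mul_abs_deriv hlam haseq hua huseq hC
        (fun n => (hL2 n).integrable one_le_two) hg))
end
end

section
/- There exist f ∈ L¹(−1,1) with f(x) ≠ 0 for almost every x ∈ (−1,1), a sequence of measurable functions a_j : (−1,1) → ℝ with 1 ≤ a_j(x) ≤ 2 for all x, and continuous functions u, u_j : [−1,1] → ℝ with u(−1) = u(1) = u_j(−1) = u_j(1) = 0 that are differentiable a.e. with square-integrable derivatives and satisfy, for every smooth compactly supported v : ℝ → ℝ with support contained in (−1,1), the weak equations ∫_{−1}^{1} u'(x) v'(x) dx = ∫_{−1}^{1} f(x) v(x) dx and ∫_{−1}^{1} a_j(x) u_j'(x) v'(x) dx = ∫_{−1}^{1} f(x) v(x) dx, such that ∫_{−1}^{1} |u_j'(x) − u'(x)|² dx → 0 as j →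 ∞ while ess sup_{x ∈ (−1,1)} |a_j(x) − 1| = 1 for every j. Consequently, convergence of the solutions in H¹ does not imply convergence of the coefficients in L^∞. -/
open MeasureTheory Set Filter

noncomputable section

namespace NoLinfty

def eps (j : ℕ) : ℝ := (2:ℝ)⁻¹ ^ (j+1)

lemma eps_pos (j : ℕ) : 0 < eps j := pow_pos (by norm_num) _

lemma eps_le (j : ℕ) : eps j ≤ 1/2 := by
  have : (2:ℝ)⁻¹ ^ (j+1) ≤ (2:ℝ)⁻¹ ^ 1 :=
    pow_le_pow_of_le_one (by norm_num) (by norm_num) (Nat.le_add_left 1 j)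
  simpa [eps] using this

def A (j : ℕ) (x : ℝ) : ℝ := if |x| < eps j then 2 else 1

def U (x : ℝ) : ℝ := (1 - x^2)/2

def Useq (j : ℕ) (x : ℝ) : ℝ := (1 - x^2)/2 - (max ((eps j)^2 - x^2) 0)/4

/-- the a.e. derivative of `Useq j` -/
def G (j : ℕ) (x : ℝ) : ℝ := if |x| < eps j then -x/2 else -x

lemma hasDerivAt_U (x : ℝ) : HasDerivAt U (-x) x := by
  have h : HasDerivAt (fun x : ℝ => (1 - x^2)/2) ((0 - 2*x)/2) x := by
    exact (((hasDerivAt_pow 2 x).const_sub 1).div_const 2).congr_deriv (by ring)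
  exact h.congr_deriv (by ring)

lemma deriv_U (x : ℝ) : deriv U x = -x := (hasDerivAt_U x).deriv

lemma hasDerivAt_Useq_small {j : ℕ} {x : ℝ} (hx : |x| < eps j) :
    HasDerivAt (Useq j) (-x/2) x := by
  have hopen : IsOpen {y : ℝ | |y| < eps j} := by
    have : {y : ℝ | |y| < eps j} = Ioo (-(eps j)) (eps j) := by
      ext y; simp [abs_lt]
    rw [this]; exact isOpen_Ioo
  have hev : Useq j =ᶠ[nhds x] fun y => (1 - y^2)/2 - ((eps j)^2 - y^2)/4 := by
    filter_upwards [hopen.mem_nhds hx] with y hy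
    have : (0:ℝ) ≤ (eps j)^2 - y^2 := by
      have := sq_lt_sq' (neg_lt_of_abs_lt hy) (lt_of_abs_lt hy)
      nlinarith [this]
    simp [Useq, max_eq_left this]
  have h : HasDerivAt (fun y : ℝ => (1 - y^2)/2 - ((eps j)^2 - y^2)/4) (-x/2) x := by
    have h1 : HasDerivAt (fun y : ℝ => (1 - y^2)/2) (-x) x := hasDerivAt_U x
    have h2 : HasDerivAt (fun y : ℝ => ((eps j)^2 - y^2)/4) ((0 - 2*x)/4) x := by
      exact (((hasDerivAt_pow 2 x).const_sub ((eps j)^2)).div_const 4).congr_deriv (by push_cast; ring)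
    exact (h1.sub h2).congr_deriv (by ring)
  exact h.congr_of_eventuallyEq hev

lemma hasDerivAt_Useq_large {j : ℕ} {x : ℝ} (hx : eps j < |x|) :
    HasDerivAt (Useq j) (-x) x := by
  have hopen : IsOpen {y : ℝ | eps j < |y|} := by
    have : Continuous (fun y : ℝ => |y|) := continuous_abs
    exact isOpen_lt continuous_const this
  have hev : Useq j =ᶠ[nhds x] U := by
    filter_upwards [hopen.mem_nhds hx] with y hy
    have : (eps j)^2 - y^2 ≤ 0 := by
      have h1 : eps j < |y| := hy
      nlinarith [abs_nonneg y, sq_abs y, eps_pos j]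
    simp [Useq, U, max_eq_right this]
  exact (hasDerivAt_U x).congr_of_eventuallyEq hev

lemma deriv_Useq_eq_G {j : ℕ} {x : ℝ} (hx : |x| ≠ eps j) : deriv (Useq j) x = G j x := by
  rcases lt_or_gt_of_ne hx with h | h
  · rw [(hasDerivAt_Useq_small h).deriv, G, if_pos h]
  · rw [(hasDerivAt_Useq_large h).deriv, G, if_neg (not_lt.2 h.le)]

lemma bad_null (j : ℕ) : volume {x : ℝ | |x| = eps j} = 0 := by
  have hsub : {x : ℝ | |x| = eps j} ⊆ {-(eps j), eps j} := by
    intro x hx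
    rcases (abs_eq (eps_pos j).le).mp hx with h | h
    · exact Or.inr (by simp [h])
    · exact Or.inl (by simp [h])
  exact measure_mono_null hsub (((Set.finite_singleton _).insert _).measure_zero _)


lemma key_ibp (v : ℝ → ℝ) (hv : ContDiff ℝ (⊤ : ℕ∞) v) (hs : tsupport v ⊆ Ioo (-1:ℝ) 1) :
    ∫ x in Ioo (-1:ℝ) 1, (-x) * deriv v x = ∫ x in Ioo (-1:ℝ) 1, v x := by
  rw [← integral_Ioc_eq_integral_Ioo, ← integral_Ioc_eq_integral_Ioo,
    ← intervalIntegral.integral_of_le (by norm_num : (-1:ℝ) ≤ 1),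
    ← intervalIntegral.integral_of_le (by norm_num : (-1:ℝ) ≤ 1)]
  have hv1 : v 1 = 0 := image_eq_zero_of_notMem_tsupport (fun h => by simpa using (hs h).2)
  have hvm1 : v (-1) = 0 := image_eq_zero_of_notMem_tsupport (fun h => by simpa using (hs h).1)
  have hder : ∀ x ∈ uIcc (-1:ℝ) 1, HasDerivAt v (deriv v x) x := fun x _ =>
    ((hv.differentiable (by simp)) x).hasDerivAt
  have hneg : ∀ x ∈ uIcc (-1:ℝ) 1, HasDerivAt (fun y : ℝ => -y) (-1 : ℝ) x := fun x _ => by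
    exact (hasDerivAt_id' x).neg
  have h := intervalIntegral.integral_mul_deriv_eq_deriv_mul hneg hder
    (continuous_const.intervalIntegrable _ _)
    ((hv.continuous_deriv (by simp)).intervalIntegrable _ _)
  rw [h, hv1, hvm1]
  simp


lemma isOpen_small (j : ℕ) : IsOpen {y : ℝ | |y| < eps j} := by
  have : {y : ℝ | |y| < eps j} = Ioo (-(eps j)) (eps j) := by
    ext y; simp [abs_lt]
  rw [this]; exact isOpen_Ioo

lemma measurable_A (j : ℕ) : Measurable (A j) :=
  Measurable.ite (isOpen_small j).measurableSet measurable_const measurable_const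

lemma A_bounds (j : ℕ) (x : ℝ) : 1 ≤ A j x ∧ A j x ≤ 2 := by
  unfold A; split <;> norm_num

lemma continuous_Useq (j : ℕ) : Continuous (Useq j) := by
  unfold Useq
  exact ((continuous_const.sub (continuous_pow 2)).div_const 2).sub
    ((((continuous_const.sub (continuous_pow 2))).max continuous_const).div_const 4)

lemma eps_sq_le (j : ℕ) : (eps j)^2 ≤ 1/4 := by
  have h1 := eps_pos j
  have h2 := eps_le j
  nlinarith

lemma Useq_boundary (j : ℕ) (x : ℝ) (hx : x^2 = 1) : Useq j x = 0 := by
  have : (eps j)^2 - x^2 ≤ 0 := by nlinarith [eps_sq_le j]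
  rw [Useq, max_eq_right this, hx]; ring

lemma ae_ne_bad (j : ℕ) : ∀ᵐ x : ℝ ∂volume, |x| ≠ eps j := by
  rw [ae_iff]
  simpa using bad_null j

lemma ae_deriv_Useq (j : ℕ) : ∀ᵐ x : ℝ ∂volume, deriv (Useq j) x = G j x := by
  filter_upwards [ae_ne_bad j] with x hx using deriv_Useq_eq_G hx

lemma ae_diff_Useq (j : ℕ) : ∀ᵐ x : ℝ ∂volume, DifferentiableAt ℝ (Useq j) x := by
  filter_upwards [ae_ne_bad j] with x hx
  rcases lt_or_gt_of_ne hx with h | h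
  · exact (hasDerivAt_Useq_small h).differentiableAt
  · exact (hasDerivAt_Useq_large h).differentiableAt

lemma G_abs_le (j : ℕ) (x : ℝ) : |G j x| ≤ |x| := by
  unfold G; split
  · rw [abs_div, abs_neg]
    have h2 : |(2:ℝ)| = 2 := by norm_num
    rw [h2]
    linarith [abs_nonneg x]
  · simp

lemma AG (j : ℕ) (x : ℝ) : A j x * G j x = -x := by
  unfold A G; split <;> ring


lemma integrable_derivU_sq : IntegrableOn (fun x => deriv U x ^ 2) (Ioo (-1:ℝ) 1) := by
  have hc : Continuous (fun x : ℝ => deriv U x ^ 2) := by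
    have : (fun x : ℝ => deriv U x ^ 2) = fun x => (-x)^2 := by
      funext x; rw [deriv_U]
    rw [this]; exact (continuous_neg).pow 2
  exact (hc.continuousOn.integrableOn_compact isCompact_Icc).mono_set Ioo_subset_Icc_self

lemma integrable_derivUseq_sq (j : ℕ) :
    IntegrableOn (fun x => deriv (Useq j) x ^ 2) (Ioo (-1:ℝ) 1) := by
  apply Integrable.mono' (g := fun _ => (1:ℝ))
    ((integrableOn_const_iff).mpr (Or.inr (by simp)))
  · exact ((measurable_deriv (Useq j)).pow_const 2).aestronglyMeasurable
  · filter_upwards [ae_restrict_of_ae (ae_deriv_Useq j), ae_restrict_mem measurableSet_Ioo]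
      with x hx hmem
    rw [Real.norm_eq_abs, hx, abs_pow]
    have h1 : |x| ≤ 1 := by
      rw [abs_le]; exact ⟨hmem.1.le, hmem.2.le⟩
    have h2 := G_abs_le j x
    have h3 := abs_nonneg (G j x)
    nlinarith

lemma weak_U (v : ℝ → ℝ) (hv : ContDiff ℝ (⊤ : ℕ∞) v) (hs : tsupport v ⊆ Ioo (-1:ℝ) 1) :
    ∫ x in Ioo (-1:ℝ) 1, deriv U x * deriv v x = ∫ x in Ioo (-1:ℝ) 1, (1:ℝ) * v x := by
  have : (fun x : ℝ => deriv U x * deriv v x) = fun x => (-x) * deriv v x := by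
    funext x; rw [deriv_U]
  rw [this, key_ibp v hv hs]
  simp

lemma weak_Useq (j : ℕ) (v : ℝ → ℝ) (hv : ContDiff ℝ (⊤ : ℕ∞) v) (hs : tsupport v ⊆ Ioo (-1:ℝ) 1) :
    ∫ x in Ioo (-1:ℝ) 1, A j x * deriv (Useq j) x * deriv v x
      = ∫ x in Ioo (-1:ℝ) 1, (1:ℝ) * v x := by
  have hcong : ∀ᵐ x ∂(volume.restrict (Ioo (-1:ℝ) 1)),
      A j x * deriv (Useq j) x * deriv v x = (-x) * deriv v x := by
    filter_upwards [ae_restrict_of_ae (ae_deriv_Useq j)] with x hx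
    rw [hx, AG]
  rw [integral_congr_ae hcong, key_ibp v hv hs]
  simp

lemma conv_L2 :
    Tendsto (fun j => ∫ x in Ioo (-1:ℝ) 1, |deriv (Useq j) x - deriv U x| ^ 2)
      atTop (nhds 0) := by
  have hub : ∀ j, (∫ x in Ioo (-1:ℝ) 1, |deriv (Useq j) x - deriv U x| ^ 2)
      ≤ 2 * (eps j)^2 := by
    intro j
    have hbd : ∀ᵐ x ∂(volume.restrict (Ioo (-1:ℝ) 1)),
        |deriv (Useq j) x - deriv U x| ^ 2 ≤ (eps j)^2 := by
      filter_upwards [ae_restrict_of_ae (ae_deriv_Useq j)] with x hx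
      rw [hx, deriv_U]
      have h1 : |G j x - -x| ≤ eps j := by
        unfold G; split
        · rename_i h
          have : |-x/2 - -x| = |x|/2 := by
            rw [show -x/2 - -x = x/2 by ring, abs_div]
            norm_num
          rw [this]
          nlinarith [eps_pos j]
        · simp [eps_pos j |>.le]
      nlinarith [abs_nonneg (G j x - -x)]
    have hint : IntegrableOn (fun x => |deriv (Useq j) x - deriv U x| ^ 2) (Ioo (-1:ℝ) 1) := by
      apply Integrable.mono' (g := fun _ => (eps j)^2)
        ((integrableOn_const_iff).mpr (Or.inr (by simp)))
      · exact (((measurable_deriv (Useq j)).sub (measurable_deriv U)).abs.pow_const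
          2).aestronglyMeasurable
      · filter_upwards [hbd] with x hx
        rwa [Real.norm_eq_abs, abs_of_nonneg (by positivity)]
    calc (∫ x in Ioo (-1:ℝ) 1, |deriv (Useq j) x - deriv U x| ^ 2)
        ≤ ∫ _x in Ioo (-1:ℝ) 1, (eps j)^2 :=
          integral_mono_ae hint ((integrableOn_const_iff).mpr (Or.inr (by simp))) hbd
      _ ≤ 2 * (eps j)^2 := by
          rw [setIntegral_const]
          simp [Real.volume_Ioo]
          nlinarith [eps_pos j, sq_nonneg (eps j)]
  have hlb : ∀ j, 0 ≤ ∫ x in Ioo (-1:ℝ) 1, |deriv (Useq j) x - deriv U x| ^ 2 :=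
    fun j => integral_nonneg (fun x => by positivity)
  have htend : Tendsto (fun j : ℕ => 2 * (eps j)^2) atTop (nhds 0) := by
    have h4 : Tendsto (fun j : ℕ => ((4:ℝ)⁻¹) ^ (j+1)) atTop (nhds 0) :=
      (tendsto_pow_atTop_nhds_zero_of_lt_one (by norm_num) (by norm_num)).comp
        (tendsto_add_atTop_nat 1)
    have heq : (fun j : ℕ => 2 * (eps j)^2) = fun j => 2 * ((4:ℝ)⁻¹) ^ (j+1) := by
      funext j
      rw [eps, ← pow_mul]
      norm_num
      rw [show (j+1)*2 = 2*(j+1) by ring, pow_mul]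
      norm_num
    rw [heq]
    simpa using h4.const_mul (2:ℝ)
  exact squeeze_zero hlb hub htend

lemma essSup_A (j : ℕ) :
    essSup (fun x => |A j x - 1|) (volume.restrict (Ioo (-1:ℝ) 1)) = 1 := by
  set μ := volume.restrict (Ioo (-1:ℝ) 1) with hμ
  have hne : μ ≠ 0 := by
    intro h
    rw [hμ, Measure.restrict_eq_zero] at h
    simp [Real.volume_Ioo] at h
    linarith
  haveI : NeBot (ae μ) := ae_neBot.mpr hne
  have hval : ∀ x, |A j x - 1| = 0 ∨ |A j x - 1| = 1 := by
    intro x; unfold A; split <;> norm_num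
  have hle1 : ∀ x, |A j x - 1| ≤ 1 := by
    intro x; rcases hval x with h | h <;> rw [h] <;> norm_num
  have hge0 : ∀ x, (0:ℝ) ≤ |A j x - 1| := fun x => abs_nonneg _
  have hupper : essSup (fun x => |A j x - 1|) μ ≤ 1 := by
    refine limsup_le_of_le ?_ (Eventually.of_forall hle1)
    have hb : IsBoundedUnder (· ≥ ·) (ae μ) (fun x => |A j x - 1|) :=
      ⟨0, eventually_map.2 (Eventually.of_forall hge0)⟩
    exact hb.isCoboundedUnder_le
  have hlower : (1:ℝ) ≤ essSup (fun x => |A j x - 1|) μ := by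
    by_contra hcon
    push_neg at hcon
    have hae := ae_lt_of_essSup_lt hcon ⟨1, eventually_map.2 (Eventually.of_forall hle1)⟩
    have hset : {x : ℝ | ¬ |A j x - 1| < 1} ⊇ Ioo (-(eps j)) (eps j) := by
      intro x hx
      have : |x| < eps j := abs_lt.mpr ⟨hx.1, hx.2⟩
      simp only [mem_setOf_eq, A, if_pos this]
      norm_num
    have hz : μ {x : ℝ | ¬ |A j x - 1| < 1} = 0 := hae
    have hpos : 0 < μ (Ioo (-(eps j)) (eps j)) := by
      rw [hμ, Measure.restrict_apply measurableSet_Ioo]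
      have hsub : Ioo (-(eps j)) (eps j) ∩ Ioo (-1:ℝ) 1 = Ioo (-(eps j)) (eps j) := by
        apply inter_eq_left.mpr
        apply Ioo_subset_Ioo <;> nlinarith [eps_le j]
      rw [hsub, Real.volume_Ioo]
      exact ENNReal.ofReal_pos.mpr (by nlinarith [eps_pos j])
    exact absurd (measure_mono_null (fun x hx => hset hx) hz) hpos.ne'
  exact le_antisymm hupper hlower

end NoLinfty

open NoLinfty in
/-- Convergence of the solutions in `H¹` does not imply convergence of the coefficients
in `L^∞`: there are `f ≠ 0` a.e. on `(-1,1)`, coefficients `a_j` with values in `[1,2]`,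
and corresponding weak solutions `u_j → u` in `H¹₀(-1,1)` while
`‖a_j - 1‖_{L^∞(-1,1)} = 1` for every `j`. -/
theorem no_Linfty_continuity :
    ∃ (f : ℝ → ℝ) (aseq : ℕ → ℝ → ℝ) (u : ℝ → ℝ) (useq : ℕ → ℝ → ℝ),
      IntegrableOn f (Ioo (-1 : ℝ) 1) ∧
      (∀ᵐ x ∂(volume.restrict (Ioo (-1 : ℝ) 1)), f x ≠ 0) ∧
      (∀ j, Measurable (aseq j)) ∧
      (∀ j x, 1 ≤ aseq j x ∧ aseq j x ≤ 2) ∧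
      ContinuousOn u (Icc (-1 : ℝ) 1) ∧ u (-1) = 0 ∧ u 1 = 0 ∧
      (∀ j, ContinuousOn (useq j) (Icc (-1 : ℝ) 1) ∧ useq j (-1) = 0 ∧ useq j 1 = 0) ∧
      (∀ᵐ x ∂(volume.restrict (Ioo (-1 : ℝ) 1)), DifferentiableAt ℝ u x) ∧
      (∀ j, ∀ᵐ x ∂(volume.restrict (Ioo (-1 : ℝ) 1)), DifferentiableAt ℝ (useq j) x) ∧
      IntegrableOn (fun x => deriv u x ^ 2) (Ioo (-1 : ℝ) 1) ∧
      (∀ j, IntegrableOn (fun x => deriv (useq j) x ^ 2) (Ioo (-1 : ℝ) 1)) ∧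
      (∀ v : ℝ → ℝ, ContDiff ℝ (⊤ : ℕ∞) v → HasCompactSupport v → tsupport v ⊆ Ioo (-1 : ℝ) 1 →
        (∫ x in Ioo (-1 : ℝ) 1, deriv u x * deriv v x) =
          ∫ x in Ioo (-1 : ℝ) 1, f x * v x) ∧
      (∀ j, ∀ v : ℝ → ℝ, ContDiff ℝ (⊤ : ℕ∞) v → HasCompactSupport v →
        tsupport v ⊆ Ioo (-1 : ℝ) 1 →
        (∫ x in Ioo (-1 : ℝ) 1, aseq j x * deriv (useq j) x * deriv v x) =
          ∫ x in Ioo (-1 : ℝ) 1, f x * v x) ∧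
      Tendsto (fun j => ∫ x in Ioo (-1 : ℝ) 1, |deriv (useq j) x - deriv u x| ^ 2)
        atTop (nhds 0) ∧
      (∀ j, essSup (fun x => |aseq j x - 1|) (volume.restrict (Ioo (-1 : ℝ) 1)) = 1) := by
  refine ⟨fun _ => 1, A, U, Useq, ?_, ?_, measurable_A, A_bounds, ?_, ?_, ?_, ?_, ?_, ?_,
    integrable_derivU_sq, integrable_derivUseq_sq, ?_, ?_, conv_L2, essSup_A⟩
  · exact (integrableOn_const_iff).mpr (Or.inr (by simp))
  · exact Eventually.of_forall (fun x => one_ne_zero)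
  · exact (continuous_const.sub (continuous_pow 2)).div_const 2 |>.continuousOn
  · norm_num [U]
  · norm_num [U]
  · exact fun j => ⟨(continuous_Useq j).continuousOn,
      Useq_boundary j (-1) (by norm_num), Useq_boundary j 1 (by norm_num)⟩
  · exact Eventually.of_forall (fun x => (hasDerivAt_U x).differentiableAt)
  · exact fun j => ae_restrict_of_ae (ae_diff_Useq j)
  · exact fun v hv _ hs => weak_U v hv hs
  · exact fun j v hv _ hs => weak_Useq j v hv hs
end
end

section
/- For every p ∈ [1, ∞) and every γ ∈ (0, 1], there exist f ∈ L¹(−1,1), a sequence of measurable functions a_j : (−1,1) → ℝ with 1 ≤ a_j(x) ≤ 2 for all x, and continuous functions u, u_j : [−1,1] → ℝ with u(−1) = u(1) = u_j(−1) = u_j(1) = 0 that are differentiable a.e. with square-integrable derivatives and satisfy, for every smooth compactly supported v : ℝ → ℝ with support contained in (−1,1), the weak equations ∫_{−1}^{1} u'(x) v'(x) dx = ∫_{−1}^{1} f(x) v(x) dx and ∫_{−1}^{1} a_j(x) u_j'(x) v'(x) dx = ∫_{−1}^{1} f(x) v(x) dx, such that 0 < ‖u_j' − u'‖_{L²(−1,1)}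 → 0 as j → ∞ and ‖a_j − 1‖_{L^p(−1,1)} ≥ ‖u_j' − u'‖_{L²(−1,1)}^{γ} for all sufficiently large j. Consequently, no Hölder stability estimate ‖a − b‖_{L^p} ≤ C‖u_a' − u_b'‖_{L²}^{γ'} with exponent γ' > γ can hold uniformly over all admissible right-hand sides f that change sign. -/
open MeasureTheory Set Filter

noncomputable section
namespace HolderCE

/-- the unperturbed solution -/
def U (m : ℕ) (x : ℝ) : ℝ := (x ^ (m+1) - 1) / ((m:ℝ)+1)
/-- the perturbation bump -/
def W (m : ℕ) (δ x : ℝ) : ℝ := max 0 ((δ ^ (m+1) - x ^ (m+1)) / (2*((m:ℝ)+1)))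
/-- coefficient -/
def A (δ x : ℝ) : ℝ := if x ∈ Ioo (-δ) δ then 2 else 1
/-- a.e. derivative of `U + W` -/
def D (m : ℕ) (δ x : ℝ) : ℝ := if x ∈ Ioo (-δ) δ then x ^ m / 2 else x ^ m

lemma hasDerivAt_U (m : ℕ) (x : ℝ) : HasDerivAt (U m) (x ^ m) x := by
  have h1 := ((hasDerivAt_pow (m+1) x).sub_const 1).div_const ((m:ℝ)+1)
  have hm : ((m:ℝ)+1) ≠ 0 := by positivity
  have he : ((↑(m+1):ℝ) * x ^ (m + 1 - 1)) / ((m:ℝ)+1) = x ^ m := by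
    push_cast; field_simp
  rw [show U m = fun y => (y ^ (m+1) - 1) / ((m:ℝ)+1) from rfl, ← he]
  exact h1

lemma hasDerivAt_W (m : ℕ) (hm : Even (m+1)) {δ x : ℝ} (hδ : 0 < δ)
    (h1 : x ≠ δ) (h2 : x ≠ -δ) :
    HasDerivAt (W m δ) (D m δ x - x ^ m) x := by
  have hm0 : (2*((m:ℝ)+1)) ≠ 0 := by positivity
  rcases lt_trichotomy |x| δ with h | h | h
  · -- inside
    have hx : x ∈ Ioo (-δ) δ := abs_lt.mp h
    have hin : HasDerivAt (fun y : ℝ => (δ ^ (m+1) - y ^ (m+1)) / (2*((m:ℝ)+1)))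
        (x ^ m / 2 - x ^ m) x := by
      have h0 := ((hasDerivAt_pow (m+1) x).const_sub (δ ^ (m+1))).div_const (2*((m:ℝ)+1))
      have he : (-((↑(m+1):ℝ) * x ^ (m + 1 - 1))) / (2*((m:ℝ)+1)) = x ^ m / 2 - x ^ m := by
        push_cast; field_simp; ring
      rw [← he]; exact h0
    have hD : D m δ x = x ^ m / 2 := if_pos hx
    rw [hD]
    refine hin.congr_of_eventuallyEq ?_
    have hopen : IsOpen {y : ℝ | |y| < δ} := isOpen_lt (continuous_abs) continuous_const
    filter_upwards [hopen.mem_nhds h] with y hy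
    have : 0 ≤ (δ ^ (m+1) - y ^ (m+1)) / (2*((m:ℝ)+1)) := by
      apply div_nonneg _ (by positivity)
      have : y ^ (m+1) ≤ δ ^ (m+1) := by
        rw [← hm.pow_abs y]
        exact pow_le_pow_left₀ (abs_nonneg y) (le_of_lt hy) _
      linarith
    simpa [W] using max_eq_right this
  · exact absurd (abs_eq hδ.le |>.mp h) (by tauto)
  · -- outside
    have hx : x ∉ Ioo (-δ) δ := fun hx => absurd (abs_lt.mpr hx) (not_lt.mpr h.le)
    have hD : D m δ x = x ^ m := if_neg hx
    rw [hD, sub_self]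
    refine (hasDerivAt_const x (0:ℝ)).congr_of_eventuallyEq ?_
    have hopen : IsOpen {y : ℝ | δ < |y|} := isOpen_lt continuous_const continuous_abs
    filter_upwards [hopen.mem_nhds h] with y hy
    have : (δ ^ (m+1) - y ^ (m+1)) / (2*((m:ℝ)+1)) ≤ 0 := by
      apply div_nonpos_of_nonpos_of_nonneg _ (by positivity)
      have : δ ^ (m+1) ≤ y ^ (m+1) := by
        rw [← hm.pow_abs y]
        exact pow_le_pow_left₀ hδ.le (le_of_lt hy) _
      linarith
    simpa [W] using max_eq_left this

lemma hasDerivAt_UW (m : ℕ) (hm : Even (m+1)) {δ x : ℝ} (hδ : 0 < δ)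
    (h1 : x ≠ δ) (h2 : x ≠ -δ) :
    HasDerivAt (fun y => U m y + W m δ y) (D m δ x) x := by
  have := (hasDerivAt_U m x).add (hasDerivAt_W m hm hδ h1 h2)
  rw [show x ^ m + (D m δ x - x ^ m) = D m δ x by ring] at this
  exact this

lemma continuous_W (m : ℕ) (δ : ℝ) : Continuous (W m δ) := by
  exact continuous_const.max (by continuity)

lemma continuous_U (m : ℕ) : Continuous (U m) := by
  unfold U; continuity

/-- integration by parts core lemma -/
lemma parts (m : ℕ) (v : ℝ → ℝ) (hv : ContDiff ℝ (⊤ : ℕ∞) v)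
    (hsupp : tsupport v ⊆ Ioo (-1 : ℝ) 1) :
    ∫ x in Ioo (-1 : ℝ) 1, x ^ m * deriv v x
      = ∫ x in Ioo (-1 : ℝ) 1, (-((m:ℝ) * x ^ (m-1))) * v x := by
  have hle : (-1 : ℝ) ≤ 1 := by norm_num
  have hv1 : v 1 = 0 := image_eq_zero_of_notMem_tsupport
    (fun h => by simpa using (hsupp h).2)
  have hvm1 : v (-1) = 0 := image_eq_zero_of_notMem_tsupport
    (fun h => by simpa using (hsupp h).1)
  have hdv : Continuous (deriv v) := hv.continuous_deriv (by simp)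
  have hib := intervalIntegral.integral_mul_deriv_eq_deriv_mul
    (a := (-1:ℝ)) (b := (1:ℝ))
    (u := fun x : ℝ => x ^ m) (u' := fun x : ℝ => (m:ℝ) * x ^ (m-1))
    (v := v) (v' := deriv v)
    (fun x _ => hasDerivAt_pow m x)
    (fun x _ => ((hv.differentiable (by simp)) x).hasDerivAt)
    (by apply Continuous.intervalIntegrable; continuity)
    (hdv.intervalIntegrable _ _)
  rw [← integral_Ioc_eq_integral_Ioo, ← intervalIntegral.integral_of_le hle,
      ← integral_Ioc_eq_integral_Ioo, ← intervalIntegral.integral_of_le hle]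
  rw [hib, hv1, hvm1]
  simp only [mul_zero, sub_zero, zero_sub]
  rw [← intervalIntegral.integral_neg]
  congr 1
  ext x
  ring


lemma ae_ne (δ : ℝ) :
    ∀ᵐ x ∂(volume.restrict (Ioo (-1:ℝ) 1)), x ≠ δ ∧ x ≠ -δ := by
  have h0 : (volume ({δ, -δ} : Set ℝ)) = 0 :=
    (Set.toFinite ({δ, -δ} : Set ℝ)).measure_zero _
  have h1 : ∀ᵐ x ∂(volume : Measure ℝ), x ∉ ({δ, -δ} : Set ℝ) :=
    measure_eq_zero_iff_ae_notMem.mp h0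
  filter_upwards [ae_restrict_of_ae h1] with x hx
  simp only [mem_insert_iff, mem_singleton_iff, not_or] at hx
  exact hx

lemma deriv_UW_ae (m : ℕ) (hm : Even (m+1)) {δ : ℝ} (hδ : 0 < δ) :
    ∀ᵐ x ∂(volume.restrict (Ioo (-1:ℝ) 1)),
      deriv (fun y => U m y + W m δ y) x = D m δ x
      ∧ DifferentiableAt ℝ (fun y => U m y + W m δ y) x := by
  filter_upwards [ae_ne δ] with x hx
  have h := hasDerivAt_UW m hm hδ hx.1 hx.2
  exact ⟨h.deriv, h.differentiableAt⟩

lemma integral_D_sq (m : ℕ) {δ : ℝ} (hδ0 : 0 < δ) (hδ1 : δ < 1) :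
    ∫ x in Ioo (-1:ℝ) 1, |D m δ x - x ^ m| ^ 2
      = δ ^ (2*m+1) / (2*(2*(m:ℝ)+1)) := by
  have hfun : ∀ x, |D m δ x - x ^ m| ^ 2
      = (Ioo (-δ) δ).indicator (fun x => x ^ (2*m) / 4) x := by
    intro x
    by_cases hx : x ∈ Ioo (-δ) δ
    · rw [indicator_of_mem hx, sq_abs]
      simp only [D, if_pos hx]
      ring
    · rw [indicator_of_notMem hx, sq_abs]
      simp only [D, if_neg hx]
      ring
  simp_rw [hfun]
  rw [setIntegral_indicator measurableSet_Ioo]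
  have hinter : Ioo (-1:ℝ) 1 ∩ Ioo (-δ) δ = Ioo (-δ) δ := by
    apply inter_eq_self_of_subset_right
    exact Ioo_subset_Ioo (by linarith) (by linarith)
  rw [hinter, ← integral_Ioc_eq_integral_Ioo,
      ← intervalIntegral.integral_of_le (by linarith : -δ ≤ δ)]
  have : ∫ x in (-δ)..δ, x ^ (2*m) / 4 = (∫ x in (-δ)..δ, x ^ (2*m)) / 4 :=
    intervalIntegral.integral_div 4 _
  rw [this, integral_pow, Odd.neg_pow ⟨m, by ring⟩]
  have hm : (2*(m:ℝ)+1) ≠ 0 := by positivity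
  push_cast
  field_simp
  ring

lemma integral_A (p : ℝ) (hp : p ≠ 0) {δ : ℝ} (hδ0 : 0 < δ) (hδ1 : δ < 1) :
    ∫ x in Ioo (-1:ℝ) 1, |A δ x - 1| ^ p = 2*δ := by
  have hfun : ∀ x, |A δ x - 1| ^ p
      = (Ioo (-δ) δ).indicator (fun _ => (1:ℝ)) x := by
    intro x
    by_cases hx : x ∈ Ioo (-δ) δ
    · rw [indicator_of_mem hx]
      rw [A, if_pos hx]
      norm_num
    · rw [indicator_of_notMem hx]
      rw [A, if_neg hx]
      norm_num [Real.zero_rpow hp]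
  simp_rw [hfun]
  rw [setIntegral_indicator measurableSet_Ioo]
  have hinter : Ioo (-1:ℝ) 1 ∩ Ioo (-δ) δ = Ioo (-δ) δ := by
    apply inter_eq_self_of_subset_right
    exact Ioo_subset_Ioo (by linarith) (by linarith)
  rw [hinter]
  simp [Real.volume_Ioo]
  rw [max_eq_left (by linarith)]
  ring


lemma W_boundary (m : ℕ) (hm : Even (m+1)) {δ x : ℝ} (hδ0 : 0 < δ) (hδ1 : δ < 1)
    (hx : 1 ≤ |x|) : W m δ x = 0 := by
  apply max_eq_left
  apply div_nonpos_of_nonpos_of_nonneg _ (by positivity)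
  have h1 : δ ^ (m+1) < 1 := pow_lt_one₀ hδ0.le hδ1 (Nat.succ_ne_zero m)
  have h2 : (1:ℝ) ≤ x ^ (m+1) := by
    rw [← hm.pow_abs x]
    exact one_le_pow₀ hx
  linarith

lemma measurable_D (m : ℕ) (δ : ℝ) : Measurable (D m δ) := by
  apply Measurable.ite measurableSet_Ioo
  · exact (measurable_id.pow_const m).div_const 2
  · exact measurable_id.pow_const m

lemma abs_D_le (m : ℕ) (δ : ℝ) {x : ℝ} (hx : |x| ≤ 1) : |D m δ x| ≤ 1 := by
  have hxm : |x ^ m| ≤ 1 := by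
    rw [abs_pow]; exact pow_le_one₀ (abs_nonneg x) hx
  rw [D]
  split
  · have h2 : |x ^ m / 2| = |x ^ m| / 2 := by
      rw [abs_div]; norm_num
    rw [h2]; linarith
  · exact hxm

end HolderCE

set_option maxHeartbeats 1000000 in
open HolderCE in
/-- main theorem -/
theorem holder_exponent_arbitrarily_small (p γ : ℝ) (hp : 1 ≤ p) (hγ0 : 0 < γ)
    (hγ1 : γ ≤ 1) :
    ∃ (f : ℝ → ℝ) (aseq : ℕ → ℝ → ℝ) (u : ℝ → ℝ) (useq : ℕ → ℝ → ℝ),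
      IntegrableOn f (Ioo (-1 : ℝ) 1) ∧
      (∀ j, Measurable (aseq j)) ∧
      (∀ j x, 1 ≤ aseq j x ∧ aseq j x ≤ 2) ∧
      ContinuousOn u (Icc (-1 : ℝ) 1) ∧ u (-1) = 0 ∧ u 1 = 0 ∧
      (∀ j, ContinuousOn (useq j) (Icc (-1 : ℝ) 1) ∧ useq j (-1) = 0 ∧ useq j 1 = 0) ∧
      (∀ᵐ x ∂(volume.restrict (Ioo (-1 : ℝ) 1)), DifferentiableAt ℝ u x) ∧
      (∀ j, ∀ᵐ x ∂(volume.restrict (Ioo (-1 : ℝ) 1)), DifferentiableAt ℝ (useq j) x) ∧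
      IntegrableOn (fun x => deriv u x ^ 2) (Ioo (-1 : ℝ) 1) ∧
      (∀ j, IntegrableOn (fun x => deriv (useq j) x ^ 2) (Ioo (-1 : ℝ) 1)) ∧
      (∀ v : ℝ → ℝ, ContDiff ℝ (⊤ : ℕ∞) v → HasCompactSupport v → tsupport v ⊆ Ioo (-1 : ℝ) 1 →
        (∫ x in Ioo (-1 : ℝ) 1, deriv u x * deriv v x) =
          ∫ x in Ioo (-1 : ℝ) 1, f x * v x) ∧
      (∀ j, ∀ v : ℝ → ℝ, ContDiff ℝ (⊤ : ℕ∞) v → HasCompactSupport v →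
        tsupport v ⊆ Ioo (-1 : ℝ) 1 →
        (∫ x in Ioo (-1 : ℝ) 1, aseq j x * deriv (useq j) x * deriv v x) =
          ∫ x in Ioo (-1 : ℝ) 1, f x * v x) ∧
      (∀ j, 0 < (∫ x in Ioo (-1 : ℝ) 1, |deriv (useq j) x - deriv u x| ^ 2) ^ ((1 : ℝ) / 2)) ∧
      Tendsto (fun j => (∫ x in Ioo (-1 : ℝ) 1, |deriv (useq j) x - deriv u x| ^ 2) ^ ((1 : ℝ) / 2))
        atTop (nhds 0) ∧
      ∃ N : ℕ, ∀ j ≥ N,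
        ((∫ x in Ioo (-1 : ℝ) 1, |deriv (useq j) x - deriv u x| ^ 2) ^ ((1 : ℝ) / 2)) ^ γ ≤
          (∫ x in Ioo (-1 : ℝ) 1, |aseq j x - 1| ^ p) ^ (1 / p) := by
  classical
  obtain ⟨M, hM⟩ : ∃ M : ℕ, γ⁻¹ ≤ (M:ℝ) := ⟨⌈γ⁻¹⌉₊, Nat.le_ceil _⟩
  set m : ℕ := 2 * M + 1 with hmdef
  have hmE : Even (m + 1) := ⟨M + 1, by omega⟩
  set δ : ℕ → ℝ := fun j => (2:ℝ)⁻¹ ^ (j + 1) with hδdef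
  have hδ0 : ∀ j, 0 < δ j := fun j => by positivity
  have hδ1 : ∀ j, δ j < 1 := fun j =>
    pow_lt_one₀ (by norm_num) (by norm_num) (Nat.succ_ne_zero j)
  have hδhalf : ∀ j, δ j ≤ 2⁻¹ ^ j := fun j => by
    exact pow_le_pow_of_le_one (by norm_num) (by norm_num) (Nat.le_succ j)
  have hp0 : (0:ℝ) < p := lt_of_lt_of_le one_pos hp
  have hderivU : deriv (U m) = fun x => x ^ m :=
    funext fun x => (hasDerivAt_U m x).deriv
  have hae : ∀ j, ∀ᵐ x ∂(volume.restrict (Ioo (-1 : ℝ) 1)),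
      deriv (fun y => U m y + W m (δ j) y) x = D m (δ j) x
      ∧ DifferentiableAt ℝ (fun y => U m y + W m (δ j) y) x :=
    fun j => deriv_UW_ae m hmE (hδ0 j)
  have key : ∀ j, (∫ x in Ioo (-1 : ℝ) 1,
      |deriv (fun y => U m y + W m (δ j) y) x - deriv (U m) x| ^ 2)
      = δ j ^ (2*m+1) / (2*(2*(m:ℝ)+1)) := by
    intro j
    rw [← integral_D_sq m (hδ0 j) (hδ1 j)]
    apply integral_congr_ae
    filter_upwards [hae j] with x hx
    have hU : deriv (U m) x = x ^ m := (hasDerivAt_U m x).deriv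
    rw [hx.1, hU]
  have keyA : ∀ j, (∫ x in Ioo (-1 : ℝ) 1, |A (δ j) x - 1| ^ p) = 2 * δ j :=
    fun j => integral_A p (ne_of_gt hp0) (hδ0 j) (hδ1 j)
  refine ⟨fun x => -((m:ℝ) * x ^ (m - 1)), fun j => A (δ j), U m,
    fun j x => U m x + W m (δ j) x,
    ?_, ?_, ?_, ?_, ?_, ?_, ?_, ?_, ?_, ?_, ?_, ?_, ?_, ?_, ?_, ?_⟩
  · -- IntegrableOn f
    have hc : Continuous fun x : ℝ => -((m:ℝ) * x ^ (m - 1)) := by continuity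
    exact (hc.integrableOn_Icc).mono_set Ioo_subset_Icc_self
  · -- measurable
    intro j
    exact Measurable.ite measurableSet_Ioo measurable_const measurable_const
  · -- bounds
    intro j x
    have h : 1 ≤ A (δ j) x ∧ A (δ j) x ≤ 2 := by
      rw [A]; constructor <;> (split <;> norm_num)
    exact h
  · exact (continuous_U m).continuousOn
  · simp [U, hmE.neg_one_pow]
  · simp [U]
  · intro j
    refine ⟨((continuous_U m).add (continuous_W m (δ j))).continuousOn, ?_, ?_⟩
    · show U m (-1) + W m (δ j) (-1) = 0
      rw [W_boundary m hmE (hδ0 j) (hδ1 j) (by norm_num)]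
      simp [U, hmE.neg_one_pow]
    · show U m 1 + W m (δ j) 1 = 0
      rw [W_boundary m hmE (hδ0 j) (hδ1 j) (by norm_num)]
      simp [U]
  · exact Filter.Eventually.of_forall fun x => (hasDerivAt_U m x).differentiableAt
  · intro j
    filter_upwards [hae j] with x hx using hx.2
  · rw [hderivU]
    have hc : Continuous fun x : ℝ => (x ^ m) ^ 2 := by continuity
    exact (hc.integrableOn_Icc).mono_set Ioo_subset_Icc_self
  · intro j
    have hD2 : IntegrableOn (fun x => D m (δ j) x ^ 2) (Ioo (-1 : ℝ) 1) := by
      apply MeasureTheory.Integrable.mono' (integrable_const 1)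
      · exact ((measurable_D m (δ j)).pow_const 2).aestronglyMeasurable
      · rw [ae_restrict_iff' measurableSet_Ioo]
        apply Filter.Eventually.of_forall
        intro x hx
        have h1 : |x| ≤ 1 := by
          rw [abs_le]; exact ⟨hx.1.le, hx.2.le⟩
        have h2 := abs_D_le m (δ j) h1
        have h3 : |D m (δ j) x ^ 2| ≤ 1 := by
          rw [abs_pow]
          nlinarith [abs_nonneg (D m (δ j) x)]
        simpa [Real.norm_eq_abs] using h3
    exact hD2.congr (by filter_upwards [hae j] with x hx; rw [hx.1])
  · intro v hv _ hsupp
    rw [hderivU]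
    exact parts m v hv hsupp
  · intro j v hv _ hsupp
    rw [← parts m v hv hsupp]
    apply integral_congr_ae
    filter_upwards [hae j] with x hx
    rw [hx.1]
    by_cases hmem : x ∈ Ioo (-(δ j)) (δ j)
    · rw [A, if_pos hmem, D, if_pos hmem]; ring
    · rw [A, if_neg hmem, D, if_neg hmem]; ring
  · intro j
    rw [key j]
    exact Real.rpow_pos_of_pos (by positivity) _
  · have h0 : Tendsto (fun j => δ j ^ (2*m+1) / (2*(2*(m:ℝ)+1))) atTop (nhds 0) := by
      apply squeeze_zero (fun j => by positivity) (fun j => ?_)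
        (tendsto_pow_atTop_nhds_zero_of_lt_one (by norm_num) (by norm_num) :
          Tendsto (fun j : ℕ => (2⁻¹:ℝ) ^ j) atTop (nhds 0))
      have h1 : δ j ^ (2*m+1) ≤ δ j :=
        pow_le_of_le_one (hδ0 j).le (hδ1 j).le (by omega)
      have h2 : δ j ^ (2*m+1) / (2*(2*(m:ℝ)+1)) ≤ δ j ^ (2*m+1) := by
        apply div_le_self (by positivity)
        have : (0:ℝ) ≤ (m:ℝ) := Nat.cast_nonneg m
        linarith
      exact le_trans h2 (le_trans h1 (hδhalf j))
    have h1 := h0.rpow_const (Or.inr (by norm_num : (0:ℝ) ≤ 1/2))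
    rw [Real.zero_rpow (by norm_num : (1:ℝ)/2 ≠ 0)] at h1
    exact h1.congr fun j => by rw [key j]
  · refine ⟨0, fun j _ => ?_⟩
    rw [key j, keyA j]
    have e1 : δ j ^ (2*m+1) / (2*(2*(m:ℝ)+1)) ≤ δ j ^ (2*m+1) := by
      apply div_le_self (by positivity)
      have : (0:ℝ) ≤ (m:ℝ) := Nat.cast_nonneg m
      linarith
    have e2 : ((δ j ^ (2*m+1) / (2*(2*(m:ℝ)+1))) ^ ((1:ℝ)/2)) ^ γ
        ≤ ((δ j ^ (2*m+1)) ^ ((1:ℝ)/2)) ^ γ :=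
      Real.rpow_le_rpow (Real.rpow_nonneg (by positivity) _)
        (Real.rpow_le_rpow (by positivity) e1 (by norm_num)) hγ0.le
    have e3 : ((δ j ^ (2*m+1)) ^ ((1:ℝ)/2)) ^ γ
        = δ j ^ (((2*m+1 : ℕ):ℝ) * (1/2) * γ) := by
      rw [← Real.rpow_natCast (δ j) (2*m+1), ← Real.rpow_mul (hδ0 j).le,
        ← Real.rpow_mul (hδ0 j).le]
    have hexp : 1/p ≤ ((2*m+1 : ℕ):ℝ) * (1/2) * γ := by
      have h1 : (1:ℝ)/p ≤ 1 := by
        rw [div_le_one hp0]; exact hp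
      have h2 : (1:ℝ) ≤ (M:ℝ) * γ := by
        rw [← inv_mul_cancel₀ (ne_of_gt hγ0)]
        exact mul_le_mul_of_nonneg_right hM hγ0.le
      have h3 : ((2*m+1 : ℕ):ℝ) = 4*(M:ℝ) + 3 := by
        rw [hmdef]; push_cast; ring
      rw [h3]
      nlinarith
    have e4 : δ j ^ (((2*m+1 : ℕ):ℝ) * (1/2) * γ) ≤ δ j ^ ((1:ℝ)/p) :=
      Real.rpow_le_rpow_of_exponent_ge (hδ0 j) (hδ1 j).le hexp
    have e5 : δ j ^ ((1:ℝ)/p) ≤ (2 * δ j) ^ ((1:ℝ)/p) :=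
      Real.rpow_le_rpow (hδ0 j).le (by linarith [hδ0 j]) (by positivity)
    calc ((δ j ^ (2*m+1) / (2*(2*(m:ℝ)+1))) ^ ((1:ℝ)/2)) ^ γ
        ≤ ((δ j ^ (2*m+1)) ^ ((1:ℝ)/2)) ^ γ := e2
      _ = δ j ^ (((2*m+1 : ℕ):ℝ) * (1/2) * γ) := e3
      _ ≤ δ j ^ ((1:ℝ)/p) := e4
      _ ≤ (2 * δ j) ^ ((1:ℝ)/p) := e5
end
end
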